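/- arXiv:2109.02043 — 7 statements merged into one kernel-verified Lean document; each statement's English description precedes it below -/
import Mathlib

section
/- Let α₁, α₂ > 0 and let X and Y be independent random variables with X distributed Gamma(shape α₁, rate α₁) and Y distributed Gamma(shape α₂, rate α₂). Then the random variable log X − log Y (equivalently log(X/Y)) is absolutely continuous with probability density function g(x) = (α₁^{α₁} α₂^{α₂} Γ(α₁+α₂)/(Γ(α₁)Γ(α₂))) · e^{α₁ x} / (α₂ + α₁ e^{x})^{α₁+α₂} for x ∈ ℝ. Equivalently, the pushforward of the product of the two gamma measures under (x,y) ↦ log x − log y is the measure on ℝ with density g with respect to Lebesgue measure. -/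
open MeasureTheory ProbabilityTheory


open Real Set in
private lemma lint_cov_aux {s : Set ℝ} {f f' : ℝ → ℝ} (hs : MeasurableSet s)
    (hf' : ∀ x ∈ s, HasDerivWithinAt f (f' x) s x) (hf : Set.InjOn f s) (g : ℝ → ENNReal) :
    ∫⁻ x in f '' s, g x = ∫⁻ x in s, ENNReal.ofReal |f' x| * g (f x) := by
  simpa only [ContinuousLinearMap.det_toSpanSingleton] using
    lintegral_image_eq_lintegral_abs_det_fderiv_mul volume hs
      (fun x hx => (hf' x hx).hasFDerivWithinAt) hf g

open Real Set in
private lemma density_calc_aux (α₁ α₂ : ℝ) (h1 : 0 < α₁) (h2 : 0 < α₂) {y u : ℝ} (hy : 0 < y) :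
    gammaPDFReal α₂ α₂ y * (y * exp u * gammaPDFReal α₁ α₁ (y * exp u))
      = (α₁ ^ α₁ * α₂ ^ α₂ * Gamma (α₁ + α₂) / (Gamma α₁ * Gamma α₂) * exp (α₁ * u) /
          (α₂ + α₁ * exp u) ^ (α₁ + α₂)) * gammaPDFReal (α₁ + α₂) (α₂ + α₁ * exp u) y := by
  have hyu : (0:ℝ) < y * exp u := mul_pos hy (exp_pos u)
  have hl : (0:ℝ) < α₂ + α₁ * exp u := by positivity
  rw [gammaPDFReal, if_pos hy.le, gammaPDFReal, if_pos hyu.le, gammaPDFReal, if_pos hy.le]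
  rw [mul_rpow hy.le (exp_pos u).le, rpow_def_of_pos (exp_pos u), log_exp]
  have hp : y ^ (α₂ - 1) * (y * y ^ (α₁ - 1)) = y ^ (α₁ + α₂ - 1) := by
    rw [show (α₁ + α₂ - 1) = (α₂ - 1) + (1 + (α₁ - 1)) by ring, rpow_add hy, rpow_add hy,
      rpow_one]
  have he : exp (-(α₂ * y)) * (exp u * (exp (u * (α₁ - 1)) *
      exp (-(α₁ * (y * exp u))))) = exp (α₁ * u) * exp (-((α₂ + α₁ * exp u) * y)) := by
    rw [← exp_add, ← exp_add, ← exp_add, ← exp_add]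
    ring_nf
  calc (α₂ ^ α₂ / Gamma α₂ * y ^ (α₂ - 1) * exp (-(α₂ * y))) *
        (y * exp u * (α₁ ^ α₁ / Gamma α₁ * (y ^ (α₁ - 1) * exp (u * (α₁ - 1))) *
          exp (-(α₁ * (y * exp u)))))
      = (α₁ ^ α₁ * α₂ ^ α₂ / (Gamma α₁ * Gamma α₂)) *
          (y ^ (α₂ - 1) * (y * y ^ (α₁ - 1))) *
          (exp (-(α₂ * y)) * (exp u * (exp (u * (α₁ - 1)) * exp (-(α₁ * (y * exp u)))))) := by
        ring
    _ = (α₁ ^ α₁ * α₂ ^ α₂ * Gamma (α₁ + α₂) / (Gamma α₁ * Gamma α₂) * exp (α₁ * u) /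
          (α₂ + α₁ * exp u) ^ (α₁ + α₂)) *
          ((α₂ + α₁ * exp u) ^ (α₁ + α₂) / Gamma (α₁ + α₂) * y ^ (α₁ + α₂ - 1) *
            exp (-((α₂ + α₁ * exp u) * y))) := by
        rw [hp, he]
        have hG1 : Gamma α₁ ≠ 0 := (Gamma_pos_of_pos h1).ne'
        have hG2 : Gamma α₂ ≠ 0 := (Gamma_pos_of_pos h2).ne'
        have hG12 : Gamma (α₁ + α₂) ≠ 0 := (Gamma_pos_of_pos (by linarith)).ne'
        have hlp : (α₂ + α₁ * exp u) ^ (α₁ + α₂) ≠ 0 := (rpow_pos_of_pos hl _).ne'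
        field_simp

open Real Set in
private lemma lintegral_gammaPDF_Ioi (a r : ℝ) (ha : 0 < a) (hr : 0 < r) :
    ∫⁻ y in Ioi (0:ℝ), gammaPDF a r y = 1 := by
  rw [setLIntegral_congr Ioi_ae_eq_Ici]
  have h := lintegral_gammaPDF_eq_one ha hr
  rw [← lintegral_add_compl (gammaPDF a r) measurableSet_Ici, compl_Ici] at h
  have h0 : ∫⁻ y in Iio (0:ℝ), gammaPDF a r y = 0 := by
    rw [setLIntegral_congr_fun_ae measurableSet_Iio
      (ae_of_all _ (fun x (hx : x < 0) ↦ gammaPDF_of_neg hx)), lintegral_zero]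
  rw [h0, add_zero] at h
  exact h

/-- If `X ~ Gamma(α₁, α₁)` and `Y ~ Gamma(α₂, α₂)` are independent, then
`log X − log Y` has density
`g(x) = α₁^{α₁} α₂^{α₂} Γ(α₁+α₂)/(Γ(α₁)Γ(α₂)) · e^{α₁ x}/(α₂+α₁ e^{x})^{α₁+α₂}`,
i.e. the pushforward of the product of the two gamma measures under
`(x,y) ↦ log x − log y` is the measure with density `g` w.r.t. Lebesgue measure. -/
theorem stmt1 (α₁ α₂ : ℝ) (h1 : 0 < α₁) (h2 : 0 < α₂) :
    Measure.map (fun p : ℝ × ℝ => Real.log p.1 - Real.log p.2)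
      ((gammaMeasure α₁ α₁).prod (gammaMeasure α₂ α₂))
      = volume.withDensity (fun x : ℝ => ENNReal.ofReal
          (α₁ ^ α₁ * α₂ ^ α₂ * Real.Gamma (α₁ + α₂) / (Real.Gamma α₁ * Real.Gamma α₂) *
            Real.exp (α₁ * x) / (α₂ + α₁ * Real.exp x) ^ (α₁ + α₂))) := by
  classical
  have := isProbabilityMeasure_gammaMeasure h1 h1
  have := isProbabilityMeasure_gammaMeasure h2 h2
  set g : ℝ → ENNReal := fun x : ℝ => ENNReal.ofReal
      (α₁ ^ α₁ * α₂ ^ α₂ * Real.Gamma (α₁ + α₂) / (Real.Gamma α₁ * Real.Gamma α₂) *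
        Real.exp (α₁ * x) / (α₂ + α₁ * Real.exp x) ^ (α₁ + α₂)) with hg
  set f₁ : ℝ → ENNReal := gammaPDF α₁ α₁ with hf₁
  set f₂ : ℝ → ENNReal := gammaPDF α₂ α₂ with hf₂
  have hmf₁ : Measurable f₁ := (measurable_gammaPDFReal α₁ α₁).ennreal_ofReal
  have hmf₂ : Measurable f₂ := (measurable_gammaPDFReal α₂ α₂).ennreal_ofReal
  have hT : Measurable (fun p : ℝ × ℝ => Real.log p.1 - Real.log p.2) :=
    (Real.measurable_log.comp measurable_fst).sub (Real.measurable_log.comp measurable_snd)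
  ext s hs
  rw [Measure.map_apply hT hs, withDensity_apply _ hs]
  set ind : ℝ → ENNReal := s.indicator 1 with hind
  have hmind : Measurable ind := measurable_one.indicator hs
  have hindval : ∀ (h : ℝ → ENNReal) (x : ℝ), s.indicator h x = h x * ind x := by
    intro h x
    by_cases hx : x ∈ s <;> simp [hind, Set.indicator, hx]
  -- Step A
  have stepA : ((gammaMeasure α₁ α₁).prod (gammaMeasure α₂ α₂))
      ((fun p : ℝ × ℝ => Real.log p.1 - Real.log p.2) ⁻¹' s)
      = ∫⁻ y, f₂ y * ∫⁻ x, f₁ x * ind (Real.log x - Real.log y) := by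
    rw [Measure.prod_apply_symm (hT hs)]
    have hslice : ∀ y : ℝ, (gammaMeasure α₁ α₁)
        ((fun x => (x, y)) ⁻¹' ((fun p : ℝ × ℝ => Real.log p.1 - Real.log p.2) ⁻¹' s))
        = ∫⁻ x, f₁ x * ind (Real.log x - Real.log y) := by
      intro y
      have hAm : MeasurableSet ((fun x : ℝ => Real.log x - Real.log y) ⁻¹' s) :=
        (Real.measurable_log.sub measurable_const) hs
      have : ((fun x => (x, y)) ⁻¹' ((fun p : ℝ × ℝ => Real.log p.1 - Real.log p.2) ⁻¹' s))
          = (fun x : ℝ => Real.log x - Real.log y) ⁻¹' s := rfl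
      rw [this, gammaMeasure, withDensity_apply _ hAm, ← lintegral_indicator hAm]
      refine lintegral_congr fun x => ?_
      by_cases hx : Real.log x - Real.log y ∈ s <;>
        simp [Set.indicator, hx, hind, hf₁]
    rw [lintegral_congr hslice, gammaMeasure,
      lintegral_withDensity_eq_lintegral_mul _ hmf₂]
    · rfl
    · exact Measurable.lintegral_prod_right
        ((hmf₁.comp measurable_snd).mul
          (hmind.comp ((Real.measurable_log.comp measurable_snd).sub
            (Real.measurable_log.comp measurable_fst))))
  rw [stepA]
  -- Step B: restrict the outer integral to `Ioi 0`
  have stepB : (∫⁻ y, f₂ y * ∫⁻ x, f₁ x * ind (Real.log x - Real.log y))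
      = ∫⁻ y in Set.Ioi 0, f₂ y * ∫⁻ x, f₁ x * ind (Real.log x - Real.log y) := by
    rw [← lintegral_indicator measurableSet_Ioi]
    refine lintegral_congr_ae ?_
    filter_upwards [compl_mem_ae_iff.mpr (measure_singleton (0:ℝ))] with y hy
    rcases lt_or_gt_of_ne (fun h : y = 0 => hy (by simp [h])) with h | h
    · rw [Set.indicator_of_notMem (by simpa using not_lt.mpr h.le), hf₂,
        gammaPDF_of_neg h, zero_mul]
    · rw [Set.indicator_of_mem (Set.mem_Ioi.mpr h)]
  rw [stepB]
  -- Step C: change of variables `x = y * exp u` in the inner integral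
  have stepC : ∀ y : ℝ, y ∈ Set.Ioi (0:ℝ) → (∫⁻ x, f₁ x * ind (Real.log x - Real.log y))
      = ∫⁻ u, ENNReal.ofReal (y * Real.exp u) * (f₁ (y * Real.exp u) * ind u) := by
    intro y hy
    have hy' : (0:ℝ) < y := hy
    have hx1 : (∫⁻ x, f₁ x * ind (Real.log x - Real.log y))
        = ∫⁻ x in Set.Ioi 0, f₁ x * ind (Real.log x - Real.log y) := by
      rw [← lintegral_indicator measurableSet_Ioi]
      refine lintegral_congr_ae ?_
      filter_upwards [compl_mem_ae_iff.mpr (measure_singleton (0:ℝ))] with x hx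
      rcases lt_or_gt_of_ne (fun h : x = 0 => hx (by simp [h])) with h | h
      · rw [Set.indicator_of_notMem (by simpa using not_lt.mpr h.le), hf₁,
          gammaPDF_of_neg h, zero_mul]
      · rw [Set.indicator_of_mem (Set.mem_Ioi.mpr h)]
    have him : (fun u : ℝ => y * Real.exp u) '' Set.univ = Set.Ioi 0 := by
      ext z
      simp only [Set.image_univ, Set.mem_range, Set.mem_Ioi]
      constructor
      · rintro ⟨u, rfl⟩; positivity
      · intro hz
        exact ⟨Real.log (z / y), by rw [Real.exp_log (div_pos hz hy')]; field_simp⟩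
    have hder : ∀ u ∈ Set.univ, HasDerivWithinAt (fun u : ℝ => y * Real.exp u)
        (y * Real.exp u) Set.univ u :=
      fun u _ => ((Real.hasDerivAt_exp u).const_mul y).hasDerivWithinAt
    have hinj : Set.InjOn (fun u : ℝ => y * Real.exp u) Set.univ := by
      intro a _ b _ hab
      exact Real.exp_injective (mul_left_cancel₀ hy'.ne' hab)
    rw [hx1, ← him, lint_cov_aux MeasurableSet.univ hder hinj, Measure.restrict_univ]
    refine lintegral_congr fun u => ?_
    rw [abs_of_pos (by positivity), Real.log_mul hy'.ne' (Real.exp_pos u).ne', Real.log_exp,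
      add_sub_cancel_left]
  rw [setLIntegral_congr_fun_ae measurableSet_Ioi
    (ae_of_all _ (fun y hy => by rw [stepC y hy]))]
  -- push `f₂ y` inside the inner integral
  have hmE : ∀ y : ℝ, Measurable fun u : ℝ =>
      ENNReal.ofReal (y * Real.exp u) * (f₁ (y * Real.exp u) * ind u) := by
    intro y
    exact ((Real.measurable_exp.const_mul y).ennreal_ofReal).mul
      ((hmf₁.comp (Real.measurable_exp.const_mul y)).mul hmind)
  rw [setLIntegral_congr_fun_ae measurableSet_Ioi (ae_of_all _ (fun y _ => by
    rw [← lintegral_const_mul (f₂ y) (hmE y)] :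
      ∀ y : ℝ, y ∈ Set.Ioi (0:ℝ) → f₂ y * (∫⁻ u, ENNReal.ofReal (y * Real.exp u) *
        (f₁ (y * Real.exp u) * ind u))
        = ∫⁻ u, f₂ y * (ENNReal.ofReal (y * Real.exp u) * (f₁ (y * Real.exp u) * ind u))))]
  -- swap the two integrals
  have hswap : Measurable (Function.uncurry fun y u : ℝ =>
      f₂ y * (ENNReal.ofReal (y * Real.exp u) * (f₁ (y * Real.exp u) * ind u))) := by
    have hyx : Measurable fun p : ℝ × ℝ => p.1 * Real.exp p.2 :=
      measurable_fst.mul measurable_snd.exp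
    exact (hmf₂.comp measurable_fst).mul
      ((hyx.ennreal_ofReal).mul ((hmf₁.comp hyx).mul (hmind.comp measurable_snd)))
  rw [lintegral_lintegral_swap hswap.aemeasurable]
  -- Step E: compute the inner integral in `y`
  have stepE : ∀ u : ℝ, (∫⁻ y in Set.Ioi 0,
      f₂ y * (ENNReal.ofReal (y * Real.exp u) * (f₁ (y * Real.exp u) * ind u)))
      = ind u * g u := by
    intro u
    have hl : (0:ℝ) < α₂ + α₁ * Real.exp u := by positivity
    have hcoef : (0:ℝ) ≤ α₁ ^ α₁ * α₂ ^ α₂ * Real.Gamma (α₁ + α₂) /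
        (Real.Gamma α₁ * Real.Gamma α₂) * Real.exp (α₁ * u) /
        (α₂ + α₁ * Real.exp u) ^ (α₁ + α₂) := by
      have g1 := Real.Gamma_pos_of_pos h1
      have g2 := Real.Gamma_pos_of_pos h2
      have g3 := Real.Gamma_pos_of_pos (show (0:ℝ) < α₁ + α₂ by linarith)
      positivity
    have hpt : ∀ y ∈ Set.Ioi (0:ℝ),
        f₂ y * (ENNReal.ofReal (y * Real.exp u) * (f₁ (y * Real.exp u) * ind u))
        = (ind u * g u) * gammaPDF (α₁ + α₂) (α₂ + α₁ * Real.exp u) y := by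
      intro y hy
      have hy' : (0:ℝ) < y := hy
      have key : f₂ y * (ENNReal.ofReal (y * Real.exp u) * f₁ (y * Real.exp u))
          = g u * gammaPDF (α₁ + α₂) (α₂ + α₁ * Real.exp u) y := by
        rw [hf₁, hf₂, gammaPDF, gammaPDF, gammaPDF,
          ← ENNReal.ofReal_mul (mul_pos hy' (Real.exp_pos u)).le,
          ← ENNReal.ofReal_mul (gammaPDFReal_nonneg h2 h2 y),
          density_calc_aux α₁ α₂ h1 h2 hy', ENNReal.ofReal_mul hcoef, hg]
      calc f₂ y * (ENNReal.ofReal (y * Real.exp u) * (f₁ (y * Real.exp u) * ind u))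
          = (f₂ y * (ENNReal.ofReal (y * Real.exp u) * f₁ (y * Real.exp u))) * ind u := by
            ring
        _ = (ind u * g u) * gammaPDF (α₁ + α₂) (α₂ + α₁ * Real.exp u) y := by
            rw [key]; ring
    rw [setLIntegral_congr_fun_ae measurableSet_Ioi (ae_of_all _ hpt),
      lintegral_const_mul _ (show Measurable (gammaPDF (α₁ + α₂) (α₂ + α₁ * Real.exp u)) from
        (measurable_gammaPDFReal _ _).ennreal_ofReal),
      lintegral_gammaPDF_Ioi _ _ (by linarith) hl, mul_one]
  rw [lintegral_congr stepE, ← lintegral_indicator hs]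
  exact lintegral_congr fun u => by rw [hindval g u, mul_comm]
end

section
/- Let E₁ and E₂ be independent random variables, each exponentially distributed with rate 1. Then for every real t ≠ 0, the characteristic function of log E₁ − log E₂ at t equals πt/sinh(πt); that is, ∫₀^∞ ∫₀^∞ (x/y)^{it} e^{−x} e^{−y} dx dy = πt/sinh(πt), where (x/y)^{it} = exp(it·log(x/y)). -/
open MeasureTheory Real

lemma gamma_aux (a : ℂ) (ha : 0 < (1 + a).re) :
    ∫ y in Set.Ioi (0 : ℝ), Complex.exp (a * Real.log y) * Complex.ofReal (Real.exp (-y))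
      = Complex.Gamma (1 + a) := by
  rw [Complex.Gamma_eq_integral ha, Complex.GammaIntegral]
  refine setIntegral_congr_fun measurableSet_Ioi (fun y hy => ?_)
  have hy0 : (0:ℝ) < y := hy
  rw [add_sub_cancel_left, Complex.cpow_def_of_ne_zero (by exact_mod_cast hy0.ne'),
    ← Complex.ofReal_log hy0.le, mul_comm, mul_comm a]

/-- For independent standard exponential `E₁, E₂`, the characteristic function of
`log E₁ − log E₂` at `t ≠ 0` is `πt/sinh(πt)`:
`∫₀^∞ ∫₀^∞ (x/y)^{it} e^{−x} e^{−y} dx dy = πt/sinh(πt)`. -/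
theorem stmt2 (t : ℝ) (ht : t ≠ 0) :
    ∫ x in Set.Ioi (0 : ℝ), ∫ y in Set.Ioi (0 : ℝ),
        Complex.exp (Complex.I * t * Real.log (x / y)) *
          Complex.ofReal (Real.exp (-x)) * Complex.ofReal (Real.exp (-y))
      = Complex.ofReal (π * t / Real.sinh (π * t)) := by
  set c : ℂ := Complex.I * t with hc
  have hc0 : c ≠ 0 := by
    simp [hc, Complex.I_ne_zero, Complex.ofReal_eq_zero, ht]
  have hre1 : 0 < (1 + c).re := by simp [hc]
  have hre2 : 0 < (1 + -c).re := by simp [hc]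
  have hB := gamma_aux (-c) hre2
  have hA := gamma_aux c hre1
  have key : (∫ x in Set.Ioi (0 : ℝ), ∫ y in Set.Ioi (0 : ℝ),
        Complex.exp (Complex.I * t * Real.log (x / y)) *
          Complex.ofReal (Real.exp (-x)) * Complex.ofReal (Real.exp (-y)))
      = Complex.Gamma (1 + c) * Complex.Gamma (1 + -c) := by
    rw [← hA, ← hB]
    rw [← integral_mul_const]
    refine setIntegral_congr_fun measurableSet_Ioi (fun x hx => ?_)
    have hx0 : (0:ℝ) < x := hx
    rw [show (Complex.exp (c * Real.log x) * ↑(Real.exp (-x))) *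
        ∫ y in Set.Ioi (0:ℝ), Complex.exp (-c * Real.log y) * ↑(Real.exp (-y))
        = ∫ y in Set.Ioi (0:ℝ), (Complex.exp (c * Real.log x) * ↑(Real.exp (-x))) *
          (Complex.exp (-c * Real.log y) * ↑(Real.exp (-y))) from (integral_const_mul _ _).symm]
    refine setIntegral_congr_fun measurableSet_Ioi (fun y hy => ?_)
    have hy0 : (0:ℝ) < y := hy
    have : Real.log (x / y) = Real.log x - Real.log y := Real.log_div hx0.ne' hy0.ne'
    rw [← hc, this]
    push_cast
    rw [mul_sub, Complex.exp_sub]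
    field_simp [Complex.exp_ne_zero]
    simp only [← Complex.exp_add]
    congr 1
    simp
  rw [key]
  -- Now the Gamma identity
  have h1 : Complex.Gamma (1 + c) = c * Complex.Gamma c := by
    rw [add_comm, Complex.Gamma_add_one c hc0]
  have h2 : Complex.Gamma c * Complex.Gamma (1 - c) = ↑π / Complex.sin (↑π * c) :=
    Complex.Gamma_mul_Gamma_one_sub c
  have hsin : Complex.sin (↑π * c) = (Real.sinh (π * t) : ℂ) * Complex.I := by
    rw [hc, show (↑π * (Complex.I * ↑t)) = (↑(π * t) : ℂ) * Complex.I by push_cast; ring,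
      Complex.sin_mul_I, Complex.ofReal_sinh]
  have hsinh : Real.sinh (π * t) ≠ 0 := by
    simp [Real.sinh_eq_zero, Real.pi_ne_zero, ht]
  have : (1 : ℂ) + -c = 1 - c := by ring
  rw [this, h1, mul_assoc, h2, hsin, hc]
  have hπ : (π : ℂ) ≠ 0 := by exact_mod_cast Real.pi_ne_zero
  field_simp
  have hsc : Complex.sinh ((π : ℂ) * t) ≠ 0 := by
    rw [show ((π : ℂ) * t) = ((π * t : ℝ) : ℂ) by push_cast; ring, ← Complex.ofReal_sinh]
    exact_mod_cast hsinh
  push_cast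
  ring
end

section
/- For every real number a, ∫₀^∞ e^{−t} · sin(t a)/t dt = arctan a, where the integrand is understood with its removable singularity at t = 0 (value a). -/
open MeasureTheory Real Set Filter

lemma cos_laplace (a : ℝ) :
    ∫ t in Set.Ioi (0 : ℝ), Real.exp (-t) * Real.cos (t * a) = 1 / (1 + a ^ 2) := by
  have h1 : (0 : ℝ) < 1 + a ^ 2 := by positivity
  set G : ℝ → ℝ := fun t => Real.exp (-t) * (a * Real.sin (t * a) - Real.cos (t * a)) / (1 + a ^ 2)
    with hG
  have hderiv : ∀ t ∈ Set.Ici (0 : ℝ), HasDerivAt G (Real.exp (-t) * Real.cos (t * a)) t := by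
    intro t _
    have hu : HasDerivAt (fun t : ℝ => Real.exp (-t)) (-Real.exp (-t)) t := by
      simpa [Function.comp_def] using (Real.hasDerivAt_exp (-t)).comp t (hasDerivAt_neg t)
    have hsin : HasDerivAt (fun t : ℝ => Real.sin (t * a)) (Real.cos (t * a) * a) t := by
      simpa [Function.comp_def] using (Real.hasDerivAt_sin (t * a)).comp t (hasDerivAt_mul_const a)
    have hcos : HasDerivAt (fun t : ℝ => Real.cos (t * a)) (-Real.sin (t * a) * a) t := by
      simpa [Function.comp_def] using (Real.hasDerivAt_cos (t * a)).comp t (hasDerivAt_mul_const a)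
    have hv : HasDerivAt (fun t : ℝ => a * Real.sin (t * a) - Real.cos (t * a))
        (a * (Real.cos (t * a) * a) - -Real.sin (t * a) * a) t :=
      ((hsin.const_mul a).sub hcos)
    have := (hu.mul hv).div_const (1 + a ^ 2)
    refine this.congr_deriv ?_
    rw [div_eq_iff h1.ne']
    ring
  have hint : IntegrableOn (fun t => Real.exp (-t) * Real.cos (t * a)) (Set.Ioi (0 : ℝ)) := by
    apply Integrable.mono' (g := fun t => Real.exp (-t))
    · simpa [IntegrableOn] using exp_neg_integrableOn_Ioi 0 one_pos
    · exact ((Real.continuous_exp.comp continuous_neg).mul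
        (Real.continuous_cos.comp (continuous_id.mul continuous_const))).aestronglyMeasurable
    · filter_upwards with t
      rw [norm_mul]
      calc ‖Real.exp (-t)‖ * ‖Real.cos (t * a)‖ ≤ ‖Real.exp (-t)‖ * 1 := by
            exact mul_le_mul_of_nonneg_left (abs_le.mpr ⟨neg_one_le_cos _, cos_le_one _⟩)
              (norm_nonneg _)
        _ = Real.exp (-t) := by simp [abs_of_pos (Real.exp_pos _)]
  have hlim : Tendsto G atTop (nhds 0) := by
    have hb : ∀ t : ℝ, |G t| ≤ ((|a| + 1) / (1 + a ^ 2)) * Real.exp (-t) := by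
      intro t
      have hnum : |a * Real.sin (t * a) - Real.cos (t * a)| ≤ |a| + 1 := by
        calc |a * Real.sin (t * a) - Real.cos (t * a)|
            ≤ |a * Real.sin (t * a)| + |Real.cos (t * a)| := abs_sub _ _
          _ ≤ |a| * 1 + 1 := by
              gcongr
              · rw [abs_mul]; gcongr; exact abs_sin_le_one _
              · exact abs_cos_le_one _
          _ = |a| + 1 := by ring
      rw [hG]
      simp only
      rw [abs_div, abs_mul, abs_of_pos h1, abs_of_pos (Real.exp_pos _)]
      calc Real.exp (-t) * |a * Real.sin (t * a) - Real.cos (t * a)| / (1 + a ^ 2)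
          ≤ Real.exp (-t) * (|a| + 1) / (1 + a ^ 2) := by gcongr
        _ = (|a| + 1) / (1 + a ^ 2) * Real.exp (-t) := by ring
    have h2 : Tendsto (fun t : ℝ => ((|a| + 1) / (1 + a ^ 2)) * Real.exp (-t)) atTop (nhds 0) := by
      simpa using (tendsto_exp_neg_atTop_nhds_zero.const_mul ((|a| + 1) / (1 + a ^ 2)))
    have h3 : Tendsto (fun t : ℝ => -(((|a| + 1) / (1 + a ^ 2)) * Real.exp (-t))) atTop
        (nhds 0) := by simpa using h2.neg
    exact tendsto_of_tendsto_of_tendsto_of_le_of_le h3 h2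
      (fun t => neg_le_of_abs_le (hb t)) (fun t => le_of_abs_le (hb t))
  have := integral_Ioi_of_hasDerivAt_of_tendsto' hderiv hint hlim
  rw [this, hG]
  simp
  ring

/-- For every real `a`, `∫₀^∞ e^{−t} sin(ta)/t dt = arctan a` (Lebesgue integral on
`(0,∞)`; the integrand has a removable singularity at `t = 0`). -/
theorem stmt5 (a : ℝ) :
    ∫ t in Set.Ioi (0 : ℝ), Real.exp (-t) * Real.sin (t * a) / t = Real.arctan a := by
  set μ := volume.restrict (Set.Ioi (0 : ℝ)) with hμ
  set F : ℝ → ℝ := fun x => ∫ t, Real.exp (-t) * Real.sin (t * x) / t ∂μ with hF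
  have hmeas : ∀ y : ℝ, AEStronglyMeasurable (fun t => Real.exp (-t) * Real.sin (t * y) / t) μ :=
    fun y => ((((Real.continuous_exp.comp continuous_neg).mul
      (Real.continuous_sin.comp (continuous_id.mul continuous_const))).continuousOn.div
      continuousOn_id (fun t ht => ne_of_gt ht)).aestronglyMeasurable measurableSet_Ioi)
  have hcosmeas : ∀ y : ℝ, AEStronglyMeasurable (fun t => Real.exp (-t) * Real.cos (t * y)) μ :=
    fun y => ((Real.continuous_exp.comp continuous_neg).mul
      (Real.continuous_cos.comp (continuous_id.mul continuous_const))).aestronglyMeasurable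
  have hexpint : Integrable (fun t => Real.exp (-t)) μ := by
    simpa [IntegrableOn] using exp_neg_integrableOn_Ioi 0 one_pos
  have hint : ∀ y : ℝ, Integrable (fun t => Real.exp (-t) * Real.sin (t * y) / t) μ := by
    intro y
    apply Integrable.mono' (hexpint.const_mul |y|) (hmeas y)
    filter_upwards [ae_restrict_mem measurableSet_Ioi] with t ht
    have ht0 : (0 : ℝ) < t := ht
    rw [norm_div, norm_mul, Real.norm_eq_abs, Real.norm_eq_abs, Real.norm_eq_abs,
      abs_of_pos (Real.exp_pos _), abs_of_pos ht0]
    rw [div_le_iff₀ ht0]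
    calc Real.exp (-t) * |Real.sin (t * y)| ≤ Real.exp (-t) * |t * y| :=
          mul_le_mul_of_nonneg_left Real.abs_sin_le_abs (Real.exp_pos _).le
      _ = |y| * Real.exp (-t) * t := by
          rw [abs_mul, abs_of_pos ht0]; ring
  have key : ∀ x : ℝ, HasDerivAt F (1 / (1 + x ^ 2)) x := by
    intro x
    have h := hasDerivAt_integral_of_dominated_loc_of_deriv_le (μ := μ)
      (F := fun y t => Real.exp (-t) * Real.sin (t * y) / t)
      (F' := fun y t => Real.exp (-t) * Real.cos (t * y))
      (bound := fun t => Real.exp (-t)) (x₀ := x) (Metric.ball_mem_nhds x one_pos)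
      (Filter.Eventually.of_forall hmeas) (hint x) (hcosmeas x) ?_ hexpint ?_
    · have := h.2
      rw [hμ] at this
      rwa [cos_laplace x] at this
    · filter_upwards with t
      intro y _
      rw [norm_mul, Real.norm_eq_abs, Real.norm_eq_abs, abs_of_pos (Real.exp_pos _)]
      calc Real.exp (-t) * |Real.cos (t * y)| ≤ Real.exp (-t) * 1 := by
            gcongr; exact Real.abs_cos_le_one _
        _ = Real.exp (-t) := mul_one _
    · filter_upwards [ae_restrict_mem measurableSet_Ioi] with t ht
      intro y _
      have ht0 : (0 : ℝ) < t := ht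
      have hsin : HasDerivAt (fun y : ℝ => Real.sin (t * y)) (Real.cos (t * y) * t) y := by
        simpa [Function.comp_def] using (Real.hasDerivAt_sin (t * y)).comp y ((hasDerivAt_id y).const_mul t)
      have := ((hsin.const_mul (Real.exp (-t))).div_const t)
      refine this.congr_deriv ?_
      rw [div_eq_iff ht0.ne']
      ring
  have hzero : ∀ x : ℝ, HasDerivAt (fun x => F x - Real.arctan x) 0 x := by
    intro x
    exact ((key x).sub (Real.hasDerivAt_arctan x)).congr_deriv (sub_self _)
  have hconst : F a - Real.arctan a = F 0 - Real.arctan 0 :=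
    is_const_of_deriv_eq_zero (fun x => (hzero x).differentiableAt)
      (fun x => (hzero x).deriv) a 0
  have hF0 : F 0 = 0 := by
    rw [hF]
    simp
  rw [hF0, Real.arctan_zero, sub_zero, sub_eq_zero] at hconst
  exact hconst
end

section
/- Fix k > 0 and c > 0. For every real t, ∫₀^∞ e^{itx} · (1/2) e^{−(x+c)/2} (x/c)^{(k/2−1)/2} I_{k/2−1}(√(c x)) dx = exp(itc/(1−2it)) · (1−2it)^{−k/2}, where (1−2it)^{−k/2} is computed with the principal branch of the complex power. In particular (t = 0) the integrand is a probability density on (0,∞). -/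
open MeasureTheory Real Set Filter Nat

section Aux

lemma aux_integrableOn_rpow_exp {s r : ℝ} (hs : 0 < s) (hr : 0 < r) :
    IntegrableOn (fun x : ℝ => x ^ (s - 1) * Real.exp (-(r * x))) (Ioi 0) := by
  have h := Real.GammaIntegral_convergent hs
  have h2 : IntegrableOn (fun x : ℝ => Real.exp (-(r * x)) * (r * x) ^ (s - 1)) (Ioi 0) := by
    have := (integrableOn_Ioi_comp_mul_left_iff
      (fun x : ℝ => Real.exp (-x) * x ^ (s - 1)) 0 hr).2 (by simpa using h)
    simpa using this
  have h3 := h2.const_mul (r ^ (1 - s))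
  refine IntegrableOn.congr_fun h3 (fun x hx => ?_) measurableSet_Ioi
  have hx0 : 0 < x := hx
  rw [Real.mul_rpow hr.le hx0.le]
  rw [show r ^ (1 - s) * (Real.exp (-(r * x)) * (r ^ (s - 1) * x ^ (s - 1)))
      = (r ^ (1 - s) * r ^ (s - 1)) * (x ^ (s - 1) * Real.exp (-(r * x))) by ring,
    ← Real.rpow_add hr]
  norm_num

lemma aux_aesm (a : ℝ) (b : ℂ) :
    AEStronglyMeasurable (fun x : ℝ => (x : ℂ) ^ ((a : ℂ) - 1) * Complex.exp (-(b * x)))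
      (volume.restrict (Ioi 0)) := by
  refine ContinuousOn.aestronglyMeasurable (fun x hx => ?_) measurableSet_Ioi
  have hx0 : (0:ℝ) < x := hx
  refine ContinuousAt.continuousWithinAt ?_
  exact ((Complex.continuousAt_ofReal_cpow_const x _ (Or.inr hx0.ne')).mul
    ((Complex.continuous_exp.comp
      ((continuous_const.mul Complex.continuous_ofReal).neg)).continuousAt))

lemma aux_norm {x : ℝ} (hx : 0 < x) (a : ℝ) (b : ℂ) :
    ‖(x : ℂ) ^ ((a : ℂ) - 1) * Complex.exp (-(b * x))‖
      = x ^ (a - 1) * Real.exp (-(b.re * x)) := by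
  rw [norm_mul, Complex.norm_exp,
    Complex.norm_cpow_eq_rpow_re_of_pos hx]
  congr 2
  · simp

lemma aux_integrable {a : ℝ} (ha : 0 < a) {b : ℂ} (hb : 0 < b.re) :
    IntegrableOn (fun x : ℝ => (x : ℂ) ^ ((a : ℂ) - 1) * Complex.exp (-(b * x))) (Ioi 0) := by
  refine Integrable.mono' (aux_integrableOn_rpow_exp ha hb) (aux_aesm a b) ?_
  filter_upwards [ae_restrict_mem measurableSet_Ioi] with x hx
  rw [aux_norm hx a b]

lemma aux_hasDerivAt {a : ℝ} (ha : 0 < a) {z : ℂ} (hz : 0 < z.re) :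
    HasDerivAt (fun b : ℂ => ∫ x : ℝ in Ioi 0, (x : ℂ) ^ ((a : ℂ) - 1) * Complex.exp (-(b * x)))
      (∫ x : ℝ in Ioi 0, (x : ℂ) ^ ((a : ℂ) - 1) * (-x) * Complex.exp (-(z * x))) z := by
  set μ := volume.restrict (Ioi (0:ℝ))
  have hε : 0 < z.re / 2 := by linarith
  have key := hasDerivAt_integral_of_dominated_loc_of_deriv_le (F := fun (b : ℂ) (x : ℝ) =>
      (x : ℂ) ^ ((a : ℂ) - 1) * Complex.exp (-(b * x)))
      (F' := fun (b : ℂ) (x : ℝ) => (x : ℂ) ^ ((a : ℂ) - 1) * (-x) * Complex.exp (-(b * x)))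
      (μ := μ) (x₀ := z)
      (bound := fun x : ℝ => x ^ ((a + 1) - 1) * Real.exp (-(z.re / 2 * x))) (Metric.ball_mem_nhds z hε)
      ?_ ?_ ?_ ?_ ?_ ?_
  · exact key.2
  · exact Eventually.of_forall fun b => aux_aesm a b
  · exact aux_integrable ha (by linarith)
  · have hm : AEStronglyMeasurable (fun x : ℝ => (-x : ℂ)) μ :=
      (Complex.continuous_ofReal.neg).aestronglyMeasurable
    exact ((aux_aesm a z).mul hm).congr (Eventually.of_forall fun x => by
      simp only [Pi.mul_apply]; ring)
  · filter_upwards [ae_restrict_mem measurableSet_Ioi] with x hx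
    intro b hb
    have hx0 : (0:ℝ) < x := hx
    have hre : z.re / 2 ≤ b.re := by
      have := Complex.abs_re_le_norm (b - z)
      have h2 : ‖b - z‖ < z.re / 2 := by
        simpa [Metric.mem_ball, Complex.dist_eq] using hb
      have : |b.re - z.re| < z.re / 2 := by
        simpa [Complex.sub_re] using lt_of_le_of_lt this h2
      have := abs_lt.1 this
      linarith [this.1]
    calc ‖(x : ℂ) ^ ((a : ℂ) - 1) * (-x) * Complex.exp (-(b * x))‖
        = x ^ (a - 1) * x * Real.exp (-(b.re * x)) := by
          rw [norm_mul, norm_mul,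
            Complex.norm_cpow_eq_rpow_re_of_pos hx0,
            Complex.norm_exp]
          simp [Complex.mul_re, abs_of_pos hx0]
      _ ≤ x ^ ((a + 1) - 1) * Real.exp (-(z.re / 2 * x)) := by
          rw [show (a + 1) - 1 = (a - 1) + 1 by ring, Real.rpow_add hx0, Real.rpow_one]
          have h1 : Real.exp (-(b.re * x)) ≤ Real.exp (-(z.re / 2 * x)) := by
            apply Real.exp_le_exp.2
            nlinarith
          nlinarith [Real.rpow_nonneg hx0.le (a - 1), Real.exp_pos (-(z.re/2 * x)),
            mul_le_mul_of_nonneg_left h1 (mul_nonneg (Real.rpow_nonneg hx0.le (a-1)) hx0.le)]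
  · exact aux_integrableOn_rpow_exp (by linarith) hε
  · filter_upwards [ae_restrict_mem measurableSet_Ioi] with x hx
    intro b hb
    have : HasDerivAt (fun b : ℂ => Complex.exp (-(b * x))) ((-x) * Complex.exp (-(b * x))) b := by
      have h1 : HasDerivAt (fun b : ℂ => -(b * (x:ℂ))) (-x : ℂ) b := by
        have h0 := ((hasDerivAt_id b).mul_const (x:ℂ)).neg
        rw [one_mul] at h0
        exact h0
      simpa [mul_comm] using h1.cexp
    have := this.const_mul ((x : ℂ) ^ ((a : ℂ) - 1))
    simpa [mul_assoc, mul_comm, mul_left_comm] using this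

lemma aux_gamma_integral {a : ℝ} (ha : 0 < a) {b : ℂ} (hb : 0 < b.re) :
    ∫ x : ℝ in Ioi 0, (x : ℂ) ^ ((a : ℂ) - 1) * Complex.exp (-(b * x))
      = (1 / b) ^ (a : ℂ) * Complex.Gamma a := by
  set U : Set ℂ := {z : ℂ | 0 < z.re} with hU
  have hUopen : IsOpen U := isOpen_lt continuous_const Complex.continuous_re
  have hUconn : IsPreconnected U := (convex_halfSpace_re_gt (0:ℝ)).isPreconnected
  set f : ℂ → ℂ := fun b => ∫ x : ℝ in Ioi 0, (x : ℂ) ^ ((a : ℂ) - 1) * Complex.exp (-(b * x))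
  set g : ℂ → ℂ := fun b => (1 / b) ^ (a : ℂ) * Complex.Gamma a
  have hf : AnalyticOnNhd ℂ f U := by
    refine DifferentiableOn.analyticOnNhd (fun z hz => ?_) hUopen
    exact ((aux_hasDerivAt ha hz).differentiableAt).differentiableWithinAt
  have hg : AnalyticOnNhd ℂ g U := by
    refine DifferentiableOn.analyticOnNhd (fun z hz => ?_) hUopen
    have hz0 : z ≠ 0 := by
      intro h
      rw [hU] at hz
      simp [h] at hz
    refine DifferentiableAt.differentiableWithinAt ?_
    refine DifferentiableAt.mul_const ?_ _
    have hd : HasDerivAt (fun z : ℂ => 1 / z) (-(z ^ 2)⁻¹) z := by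
      simpa [one_div] using hasDerivAt_inv hz0
    have hmem : (1 / z : ℂ) ∈ Complex.slitPlane := by
      rw [Complex.mem_slitPlane_iff]
      left
      simp only [one_div, Complex.inv_re]
      exact div_pos hz (Complex.normSq_pos.2 hz0)
    exact (hd.cpow_const hmem).differentiableAt
  have h1U : (1:ℂ) ∈ U := by simp [hU]
  have hfreq : ∃ᶠ z in nhdsWithin 1 {(1:ℂ)}ᶜ, f z = g z := by
    have htend : Tendsto (fun n : ℕ => (1 + ((n:ℝ) + 1)⁻¹ : ℂ)) atTop
        (nhdsWithin 1 {(1:ℂ)}ᶜ) := by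
      refine tendsto_nhdsWithin_of_tendsto_nhds_of_eventually_within _ ?_ ?_
      · have : Tendsto (fun n : ℕ => ((n:ℝ) + 1)⁻¹) atTop (nhds 0) :=
          tendsto_one_div_add_atTop_nhds_zero_nat.congr (by intro n; rw [one_div])
        have h2 : Tendsto (fun n : ℕ => ((((n:ℝ) + 1)⁻¹ : ℝ) : ℂ)) atTop (nhds 0) := by
          have h3 := (Complex.continuous_ofReal.tendsto 0).comp this
          rw [Complex.ofReal_zero] at h3
          exact h3
        simpa using tendsto_const_nhds.add h2
      · filter_upwards with n
        simp only [mem_compl_iff, mem_singleton_iff]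
        intro h
        have h4 : ((((n:ℝ) + 1)⁻¹ : ℝ) : ℂ) = 0 := by
          have h5 := congrArg (fun w => w - 1) h
          rw [add_sub_cancel_left, sub_self] at h5
          exact h5
        rw [Complex.ofReal_eq_zero] at h4
        have h6 : (0:ℝ) < ((n:ℝ) + 1)⁻¹ := by positivity
        rw [h4] at h6
        exact lt_irrefl 0 h6
    refine htend.frequently (Frequently.of_forall fun n => ?_)
    have hr : (0:ℝ) < 1 + ((n:ℝ) + 1)⁻¹ := by positivity
    have := Complex.integral_cpow_mul_exp_neg_mul_Ioi
      (a := (a:ℂ)) (r := 1 + ((n:ℝ) + 1)⁻¹) (by simpa using ha) hr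
    simp only [f, g]
    push_cast at this ⊢
    convert this using 2
  have := hf.eqOn_of_preconnected_of_frequently_eq hg hUconn h1U hfreq
  exact this hb

lemma aux_cpow_real_mul {r : ℝ} (hr : 0 < r) {z : ℂ} (hz : z ≠ 0) (s : ℂ) :
    ((r : ℂ) * z) ^ s = (r : ℂ) ^ s * z ^ s := by
  have hr0 : (r : ℂ) ≠ 0 := Complex.ofReal_ne_zero.2 hr.ne'
  rw [Complex.cpow_def_of_ne_zero (mul_ne_zero hr0 hz), Complex.cpow_def_of_ne_zero hr0,
    Complex.cpow_def_of_ne_zero hz, Complex.log_ofReal_mul hr hz, add_mul, Complex.exp_add,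
    Complex.ofReal_log hr.le]

lemma aux_cexp_tsum (z : ℂ) : ∑' n : ℕ, z ^ n / n ! = Complex.exp z := by
  rw [Complex.exp_eq_exp_ℂ, NormedSpace.exp_eq_tsum_div]

end Aux

/-- The modified Bessel function of the first kind of order `ν`,
`I_ν(x) = ∑ (x/2)^(2j+ν)/(j!·Γ(ν+j+1))` (for `x > 0`, with real powers). -/
noncomputable def besselI (ν x : ℝ) : ℝ :=
  ∑' j : ℕ, (x / 2) ^ (2 * (j : ℝ) + ν) / ((Nat.factorial j : ℝ) * Real.Gamma (ν + j + 1))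

/-- The characteristic function of the non-central chi-square distribution `χ²_c(k)`:
`∫₀^∞ e^{itx} (1/2)e^{−(x+c)/2}(x/c)^{(k/2−1)/2} I_{k/2−1}(√(cx)) dx
  = exp(itc/(1−2it))·(1−2it)^{−k/2}` (principal complex power). -/
theorem stmt8 (k c : ℝ) (hk : 0 < k) (hc : 0 < c) (t : ℝ) :
    ∫ x in Set.Ioi (0 : ℝ),
        Complex.exp (Complex.I * t * x) *
          Complex.ofReal ((1 / 2) * Real.exp (-(x + c) / 2) * (x / c) ^ ((k / 2 - 1) / 2) *
            besselI (k / 2 - 1) (Real.sqrt (c * x)))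
      = Complex.exp (Complex.I * t * c / (1 - 2 * Complex.I * t)) *
          (1 - 2 * Complex.I * t) ^ (-(k : ℂ) / 2) := by
  set ν : ℝ := k / 2 - 1 with hν
  set b : ℂ := 1/2 - Complex.I * t with hbdef
  have hbre : b.re = 1/2 := by simp [hbdef]
  have hbpos : 0 < b.re := by rw [hbre]; norm_num
  have hb0 : b ≠ 0 := by
    intro h
    rw [h] at hbre
    simp at hbre
  set s : ℕ → ℝ := fun j => (j:ℝ) + k/2 with hsdef
  have hspos : ∀ j : ℕ, 0 < s j := fun j => by
    have : (0:ℝ) ≤ (j:ℝ) := Nat.cast_nonneg j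
    simp only [hsdef]
    positivity
  have hΓpos : ∀ j : ℕ, 0 < Real.Gamma (ν + j + 1) := fun j => by
    apply Real.Gamma_pos_of_pos
    have : (0:ℝ) ≤ (j:ℝ) := Nat.cast_nonneg j
    simp only [hν]
    linarith
  set A : ℕ → ℝ := fun j => (1/2) * Real.exp (-c/2) * c ^ (j:ℝ)
      / ((2:ℝ) ^ (2*(j:ℝ) + ν) * (j)! * Real.Gamma (ν + j + 1)) with hAdef
  set F : ℕ → ℝ → ℂ := fun j x =>
    (A j : ℂ) * ((x:ℂ) ^ ((s j : ℂ) - 1) * Complex.exp (-(b * x))) with hFdef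
  have hΓeq : ∀ j : ℕ, ν + (j:ℝ) + 1 = s j := fun j => by
    simp only [hν, hsdef]; ring
  -- pointwise identity
  have hpoint : ∀ x ∈ Ioi (0:ℝ),
      Complex.exp (Complex.I * t * x) *
        Complex.ofReal ((1 / 2) * Real.exp (-(x + c) / 2) * (x / c) ^ (ν / 2) *
          besselI ν (Real.sqrt (c * x))) = ∑' j, F j x := by
    intro x hx
    have hx0 : (0:ℝ) < x := hx
    have hcx : (0:ℝ) < c * x := mul_pos hc hx0
    have hterm : ∀ j : ℕ,
        (1/2) * Real.exp (-(x + c)/2) * (x/c) ^ (ν/2) *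
          ((Real.sqrt (c*x)/2) ^ (2*(j:ℝ)+ν) / ((j)! * Real.Gamma (ν + j + 1)))
        = A j * (Real.exp (-(x/2)) * x ^ (s j - 1)) := by
      intro j
      have e1 : (Real.sqrt (c*x)/2) ^ (2*(j:ℝ)+ν)
          = c ^ ((j:ℝ) + ν/2) * x ^ ((j:ℝ) + ν/2) / (2:ℝ) ^ (2*(j:ℝ)+ν) := by
        rw [Real.div_rpow (Real.sqrt_nonneg _) (by norm_num : (0:ℝ) ≤ 2),
          Real.sqrt_eq_rpow, ← Real.rpow_mul hcx.le,
          show 1/2 * (2*(j:ℝ)+ν) = (j:ℝ) + ν/2 by ring,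
          Real.mul_rpow hc.le hx0.le]
      have e2 : ((x/c) ^ (ν/2)) = x ^ (ν/2) / c ^ (ν/2) :=
        Real.div_rpow hx0.le hc.le _
      have e3 : Real.exp (-(x + c)/2) = Real.exp (-(x/2)) * Real.exp (-(c/2)) := by
        rw [← Real.exp_add]; congr 1; ring
      have e4 : x ^ (s j - 1) = x ^ (ν/2) * x ^ ((j:ℝ) + ν/2) := by
        rw [← Real.rpow_add hx0]
        congr 1
        simp only [hsdef, hν]
        ring
      have e5 : c ^ ((j:ℝ) + ν/2) = c ^ (j:ℝ) * c ^ (ν/2) := by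
        rw [← Real.rpow_add hc]
      rw [e1, e2, e3, e4, e5]
      simp only [hAdef]
      have h2p : (0:ℝ) < (2:ℝ) ^ (2*(j:ℝ)+ν) := Real.rpow_pos_of_pos two_pos _
      have hcp : (0:ℝ) < c ^ (ν/2) := Real.rpow_pos_of_pos hc _
      have hfp : (0:ℝ) < ((j)! : ℝ) := by exact_mod_cast Nat.factorial_pos j
      have hgp := hΓpos j
      field_simp
    rw [besselI]
    rw [show ((1 / 2) * Real.exp (-(x + c) / 2) * (x / c) ^ (ν / 2) *
        ∑' j : ℕ, (Real.sqrt (c*x) / 2) ^ (2 * (j : ℝ) + ν)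
          / ((Nat.factorial j : ℝ) * Real.Gamma (ν + j + 1)))
      = ∑' j : ℕ, (1 / 2) * Real.exp (-(x + c) / 2) * (x / c) ^ (ν / 2) *
          ((Real.sqrt (c*x) / 2) ^ (2 * (j : ℝ) + ν)
            / ((Nat.factorial j : ℝ) * Real.Gamma (ν + j + 1))) from tsum_mul_left.symm]
    rw [Complex.ofReal_tsum, ← tsum_mul_left]
    refine tsum_congr fun j => ?_
    rw [hterm j]
    have eexp : Complex.exp (Complex.I * t * x) * ((Real.exp (-(x/2)) : ℝ) : ℂ)
        = Complex.exp (-(b * x)) := by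
      rw [Complex.ofReal_exp, ← Complex.exp_add]
      congr 1
      rw [hbdef]
      push_cast
      ring
    calc Complex.exp (Complex.I * t * x) * ((A j * (Real.exp (-(x/2)) * x ^ (s j - 1)) : ℝ) : ℂ)
        = (A j : ℂ) * (((x ^ (s j - 1) : ℝ) : ℂ) *
            (Complex.exp (Complex.I * t * x) * ((Real.exp (-(x/2)) : ℝ) : ℂ))) := by
          push_cast
          ring
      _ = F j x := by
          rw [eexp, hFdef, Complex.ofReal_cpow hx0.le]
          push_cast
          ring_nf
  -- positivity of A
  have hApos : ∀ j : ℕ, 0 < A j := fun j => by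
    simp only [hAdef]
    have h1 := hΓpos j
    have hfp : (0:ℝ) < ((j)! : ℝ) := by exact_mod_cast Nat.factorial_pos j
    positivity
  -- integrability of each term
  have hFint : ∀ j : ℕ, IntegrableOn (F j) (Ioi (0:ℝ)) := fun j =>
    (aux_integrable (hspos j) hbpos).const_mul _
  -- norm integrals
  have hnormint : ∀ j : ℕ, (∫ x in Ioi (0:ℝ), ‖F j x‖)
      = Real.exp (-c/2) * ((c/2) ^ j / (j)!) := by
    intro j
    have h1 : ∀ x ∈ Ioi (0:ℝ), ‖F j x‖
        = A j * (x ^ (s j - 1) * Real.exp (-((1:ℝ)/2 * x))) := by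
      intro x hx
      have hx0 : (0:ℝ) < x := hx
      rw [hFdef]
      simp only []
      rw [norm_mul, aux_norm hx0 (s j) b, hbre]
      rw [Complex.norm_real, Real.norm_eq_abs, abs_of_pos (hApos j)]
    rw [setIntegral_congr_fun measurableSet_Ioi h1, MeasureTheory.integral_const_mul,
      Real.integral_rpow_mul_exp_neg_mul_Ioi (hspos j) (by norm_num : (0:ℝ) < 1/2)]
    rw [show ((1:ℝ)/(1/2)) = (2:ℝ) by norm_num]
    simp only [hAdef]
    rw [hΓeq j]
    have h2 : (2:ℝ) ^ (s j) = (2:ℝ) ^ (2*(j:ℝ) + ν) * (2:ℝ) ^ ((1:ℝ) - (j:ℝ)) := by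
      rw [← Real.rpow_add two_pos]
      congr 1
      simp only [hsdef, hν]
      ring
    have h3 : (2:ℝ) ^ ((1:ℝ) - (j:ℝ)) = 2 / 2 ^ j := by
      rw [Real.rpow_sub two_pos, Real.rpow_one, Real.rpow_natCast]
    have h4 : c ^ (j:ℝ) = c ^ j := Real.rpow_natCast c j
    rw [h2, h3, h4]
    have hgp : (0 : ℝ) < Real.Gamma (s j) := by rw [← hΓeq j]; exact hΓpos j
    have h2p : (0:ℝ) < (2:ℝ) ^ (2*(j:ℝ)+ν) := Real.rpow_pos_of_pos two_pos _
    have hfp : (0:ℝ) < ((j)! : ℝ) := by exact_mod_cast Nat.factorial_pos j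
    rw [div_pow]
    field_simp
  have hsum : Summable (fun j : ℕ => ∫ x in Ioi (0:ℝ), ‖F j x‖) :=
    ((Real.summable_pow_div_factorial (c/2)).mul_left _).congr (fun j => (hnormint j).symm)
  -- values of the integrals
  have hval : ∀ j : ℕ, (∫ x in Ioi (0:ℝ), F j x)
      = ((A j * Real.Gamma (s j) : ℝ) : ℂ) * (1/b) ^ ((s j : ℝ) : ℂ) := by
    intro j
    rw [hFdef]
    simp only []
    rw [MeasureTheory.integral_const_mul, aux_gamma_integral (hspos j) hbpos,
      Complex.Gamma_ofReal]
    push_cast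
    ring
  have hD : ∀ j : ℕ, A j * Real.Gamma (s j)
      = (Real.exp (-c/2) * ((2:ℝ) ^ (-ν) / 2)) * ((c/4) ^ j / (j)!) := by
    intro j
    simp only [hAdef]
    rw [hΓeq j]
    have h2j : (2:ℝ) ^ (2*(j:ℝ)) = 4 ^ j := by
      rw [show 2*(j:ℝ) = ((2*j : ℕ) : ℝ) by push_cast; ring, Real.rpow_natCast, pow_mul]
      norm_num
    have h24 : (2:ℝ) ^ (2*(j:ℝ) + ν) = 4 ^ j * (2:ℝ) ^ ν := by
      rw [Real.rpow_add two_pos, h2j]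
    have h4 : c ^ (j:ℝ) = c ^ j := Real.rpow_natCast c j
    rw [h24, h4, Real.rpow_neg two_pos.le]
    have h2ν : (0:ℝ) < (2:ℝ) ^ ν := Real.rpow_pos_of_pos two_pos _
    have hgp : (0 : ℝ) < Real.Gamma (s j) := by rw [← hΓeq j]; exact hΓpos j
    have hfp : (0:ℝ) < ((j)! : ℝ) := by exact_mod_cast Nat.factorial_pos j
    rw [div_pow]
    field_simp
  -- assemble
  trans (∫ x in Ioi (0:ℝ), ∑' j, F j x)
  · exact setIntegral_congr_fun measurableSet_Ioi hpoint
  trans (∑' j, ∫ x in Ioi (0:ℝ), F j x)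
  · exact (MeasureTheory.integral_tsum_of_summable_integral_norm hFint hsum).symm
  trans ((((Real.exp (-c/2) * ((2:ℝ) ^ (-ν) / 2) : ℝ)) : ℂ) * (1/b) ^ ((k:ℂ)/2) *
      Complex.exp ((c:ℂ)/4 * (1/b)))
  · have hper : ∀ j : ℕ, (∫ x in Ioi (0:ℝ), F j x)
        = ((((Real.exp (-c/2) * ((2:ℝ) ^ (-ν) / 2) : ℝ)) : ℂ) * (1/b) ^ ((k:ℂ)/2)) *
            (((c:ℂ)/4 * (1/b)) ^ j / ((j)! : ℂ)) := by
      intro j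
      rw [hval j, hD j]
      have hcast : ((s j : ℝ) : ℂ) = (j:ℂ) + (k:ℂ)/2 := by
        simp only [hsdef]
        push_cast
        ring
      rw [hcast, Complex.cpow_add _ _ (one_div_ne_zero hb0), Complex.cpow_natCast]
      push_cast
      rw [mul_pow]
      ring
    rw [tsum_congr hper, tsum_mul_left, aux_cexp_tsum]
  · have h2b : (1 : ℂ) - 2 * Complex.I * t = ((2:ℝ) : ℂ) * b := by
      rw [hbdef]
      push_cast
      ring
    rw [h2b, aux_cpow_real_mul two_pos hb0]
    have harg : b.arg ≠ Real.pi := by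
      intro h
      have h1 := (Complex.arg_eq_pi_iff.1 h).1
      rw [hbre] at h1
      norm_num at h1
    have hcpowb : (1/b : ℂ) ^ ((k:ℂ)/2) = b ^ (-((k:ℂ)/2)) := by
      rw [one_div, Complex.inv_cpow _ _ harg, ← Complex.cpow_neg]
    have hr : (2:ℝ) ^ (-ν) / 2 = (2:ℝ) ^ (-(k/2)) := by
      have h5 := Real.rpow_add two_pos (-(k/2)) 1
      rw [Real.rpow_one] at h5
      rw [div_eq_iff (by norm_num : (2:ℝ) ≠ 0), show -ν = -(k/2) + 1 by
        simp only [hν]; ring, h5]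
    have h2pow : (((2:ℝ) ^ (-(k/2)) : ℝ) : ℂ) = ((2:ℝ) : ℂ) ^ (-(k:ℂ)/2) := by
      rw [Complex.ofReal_cpow (by norm_num : (0:ℝ) ≤ 2)]
      congr 1
      push_cast
      ring
    have hexpfin : ((Real.exp (-c/2) : ℝ) : ℂ) * Complex.exp ((c:ℂ)/4 * (1/b))
        = Complex.exp (Complex.I * t * c / (((2:ℝ):ℂ) * b)) := by
      rw [Complex.ofReal_exp, ← Complex.exp_add]
      congr 1
      field_simp
      rw [hbdef]
      push_cast
      ring
    rw [hr, Complex.ofReal_mul, h2pow, hcpowb, ← hexpfin]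
    ring
end

section
/- For every real k > 0 and every real t, (1−2it)^{−k/2} = exp( ∫₀^∞ (e^{itx} − 1) · (k/2) · e^{−x/2}/x dx ), where (1−2it)^{−k/2} is computed with the principal branch of the complex power and the integral is a Lebesgue integral of a complex-valued function over (0,∞). -/
open MeasureTheory Set Complex Filter Metric


lemma abs_exp_I_sub_one_le (θ : ℝ) : ‖Complex.exp (θ * Complex.I) - 1‖ ≤ |θ| := by
  rw [Complex.exp_mul_I]
  have h : Complex.cos θ + Complex.sin θ * Complex.I - 1
      = Complex.ofReal (Real.cos θ - 1) + Complex.ofReal (Real.sin θ) * Complex.I := by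
    push_cast; ring
  rw [h]
  have habs : ‖(Complex.ofReal (Real.cos θ - 1) + Complex.ofReal (Real.sin θ) * Complex.I)‖
      = Real.sqrt ((Real.cos θ - 1)^2 + (Real.sin θ)^2) := by
    rw [Complex.norm_def, Complex.normSq_add_mul_I]
  rw [habs, ← Real.sqrt_sq (abs_nonneg θ)]
  apply Real.sqrt_le_sqrt
  have hs : (Real.cos θ - 1)^2 + (Real.sin θ)^2 = 2 - 2 * Real.cos θ := by
    have := Real.sin_sq_add_cos_sq θ; nlinarith
  have hhalf : Real.cos θ = 1 - 2 * Real.sin (θ/2) ^ 2 := by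
    have h1 := Real.cos_two_mul (θ/2)
    have h2 := Real.sin_sq_add_cos_sq (θ/2)
    rw [show 2*(θ/2) = θ by ring] at h1
    nlinarith
  have hsin : Real.sin (θ/2)^2 ≤ (θ/2)^2 := Real.sin_sq_le_sq
  rw [_root_.sq_abs]
  nlinarith

lemma integral_cexp_Ioi (c : ℂ) (hc : c.re < 0) :
    ∫ x in Ioi (0:ℝ), Complex.exp (c * x) = -1 / c := by
  have hc0 : c ≠ 0 := fun h => by simp [h] at hc
  have hderiv : ∀ x ∈ Ici (0:ℝ), HasDerivAt (fun x : ℝ => Complex.exp (c * x) / c)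
      (Complex.exp (c * x)) x := by
    intro x _
    have h1 : HasDerivAt (fun z : ℂ => Complex.exp (c * z)) (c * Complex.exp (c * x)) x := by
      simpa [mul_comm, Function.comp_def] using ((Complex.hasDerivAt_exp (c * x)).comp (x : ℂ)
        ((hasDerivAt_id (x : ℂ)).const_mul c))
    have h2 := h1.comp_ofReal
    simpa [mul_div_assoc, mul_div_cancel_left₀ _ hc0] using h2.div_const c
  have hint : IntegrableOn (fun x : ℝ => Complex.exp (c * x)) (Ioi 0) := by
    apply Integrable.mono' (g := fun x : ℝ => Real.exp (-(-c.re) * x))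
      ((exp_neg_integrableOn_Ioi 0 (by linarith)))
    · exact (Complex.continuous_exp.comp
        (continuous_const.mul Complex.continuous_ofReal)).aestronglyMeasurable
    · filter_upwards with x
      rw [Complex.norm_exp]
      simp
  have htend : Tendsto (fun x : ℝ => Complex.exp (c * x) / c) atTop (nhds 0) := by
    rw [tendsto_zero_iff_norm_tendsto_zero]
    have heq : (fun x : ℝ => ‖Complex.exp (c * x) / c‖) = fun x : ℝ => Real.exp (c.re * x) / ‖c‖ := by
      funext x; rw [norm_div, Complex.norm_exp]; simp
    rw [heq]
    have h3 : Tendsto (fun x : ℝ => c.re * x) atTop atBot :=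
      (tendsto_const_mul_atBot_of_neg hc).mpr tendsto_id
    simpa using (Real.tendsto_exp_atBot.comp h3).div_const ‖c‖
  rw [integral_Ioi_of_hasDerivAt_of_tendsto' hderiv hint htend]
  simp [neg_div]


lemma expdecay_int : IntegrableOn (fun x : ℝ => Real.exp (-x/2)) (Ioi (0:ℝ)) := by
  have := exp_neg_integrableOn_Ioi (0:ℝ) (show (0:ℝ) < 1/2 by norm_num)
  refine this.congr_fun (fun x _ => by ring_nf) measurableSet_Ioi

lemma ne_z (t : ℝ) : (1 - 2*Complex.I*t) ≠ 0 := by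
  intro h
  have := congrArg Complex.re h
  simp at this

lemma hasDerivG (t₀ : ℝ) :
    HasDerivAt (fun t : ℝ => ∫ x in Ioi (0:ℝ),
        (Complex.exp (Complex.I*t*x) - 1) * Complex.ofReal (Real.exp (-x/2) / x))
      (2*Complex.I/(1 - 2*Complex.I*t₀)) t₀ := by
  set F : ℝ → ℝ → ℂ := fun t x =>
    (Complex.exp (Complex.I*t*x) - 1) * Complex.ofReal (Real.exp (-x/2) / x) with hF
  set F' : ℝ → ℝ → ℂ := fun t x =>
    Complex.exp (Complex.I*t*x) * (Complex.I * x) * Complex.ofReal (Real.exp (-x/2) / x) with hF'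
  have meas : ∀ t : ℝ, AEStronglyMeasurable (F t)
      (volume.restrict (Ioi (0:ℝ))) := by
    intro t; apply Measurable.aestronglyMeasurable; fun_prop
  have meas' : AEStronglyMeasurable (F' t₀) (volume.restrict (Ioi (0:ℝ))) := by
    apply Measurable.aestronglyMeasurable; fun_prop
  have hFint : Integrable (F t₀) (volume.restrict (Ioi (0:ℝ))) := by
    refine Integrable.mono' ((expdecay_int.const_mul |t₀|)) (meas t₀) ?_
    filter_upwards [ae_restrict_mem measurableSet_Ioi] with x hx
    have hx0 : (0:ℝ) < x := hx
    have h1 : Complex.I*(t₀:ℂ)*(x:ℂ) = ((t₀*x : ℝ) : ℂ) * Complex.I := by push_cast; ring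
    rw [hF]
    simp only [norm_mul, h1]
    rw [Complex.norm_real, Real.norm_eq_abs]
    calc ‖Complex.exp (((t₀*x : ℝ) : ℂ) * Complex.I) - 1‖ * |Real.exp (-x/2) / x|
        ≤ |t₀*x| * |Real.exp (-x/2) / x| :=
          mul_le_mul_of_nonneg_right (abs_exp_I_sub_one_le _) (abs_nonneg _)
      _ = |t₀| * Real.exp (-x/2) := by
          rw [abs_mul, abs_div, abs_of_pos hx0, abs_of_pos (Real.exp_pos _)]
          field_simp
  have hbound : ∀ᵐ x ∂(volume.restrict (Ioi (0:ℝ))), ∀ t ∈ ball t₀ 1,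
      ‖F' t x‖ ≤ Real.exp (-x/2) := by
    filter_upwards [ae_restrict_mem measurableSet_Ioi] with x hx t _
    have hx0 : (0:ℝ) < x := hx
    rw [hF']
    simp only [norm_mul, Complex.norm_real, Real.norm_eq_abs, Complex.norm_I,
      Complex.norm_exp]
    have : (Complex.I*(t:ℂ)*(x:ℂ)).re = 0 := by simp
    rw [this, Real.exp_zero]
    apply le_of_eq
    rw [abs_div, abs_of_pos hx0, abs_of_pos (Real.exp_pos _)]
    field_simp
  have hdiff : ∀ᵐ x ∂(volume.restrict (Ioi (0:ℝ))), ∀ t ∈ ball t₀ 1,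
      HasDerivAt (fun t => F t x) (F' t x) t := by
    filter_upwards with x t _
    have hinner : HasDerivAt (fun z : ℂ => Complex.I * z * (x:ℂ)) (Complex.I * x) (t:ℂ) := by
      simpa using (((hasDerivAt_id (t:ℂ)).const_mul Complex.I).mul_const (x:ℂ))
    have hexp := hinner.cexp
    have := ((hexp.comp_ofReal).sub_const 1).mul_const (Complex.ofReal (Real.exp (-x/2) / x))
    simpa [hF, hF'] using this
  have key := hasDerivAt_integral_of_dominated_loc_of_deriv_le (ball_mem_nhds t₀ one_pos)
    (Eventually.of_forall meas) hFint meas' hbound expdecay_int hdiff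
  have hval : (∫ x in Ioi (0:ℝ), F' t₀ x) = 2*Complex.I/(1 - 2*Complex.I*t₀) := by
    have hcongr : (∫ x in Ioi (0:ℝ), F' t₀ x)
        = ∫ x in Ioi (0:ℝ), Complex.I * Complex.exp ((Complex.I*t₀ - 1/2) * x) := by
      refine setIntegral_congr_fun measurableSet_Ioi (fun x hx => ?_)
      have hx0 : (0:ℝ) < x := hx
      have hxne : (x:ℂ) ≠ 0 := by exact_mod_cast hx0.ne'
      rw [hF']
      have : ((Real.exp (-x/2) : ℝ) : ℂ) = Complex.exp ((-x/2 : ℝ)) := by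
        rw [Complex.ofReal_exp]
      push_cast [this]
      rw [show (Complex.I*(t₀:ℂ) - 1/2)*(x:ℂ) = Complex.I*(t₀:ℂ)*(x:ℂ) + (-(x:ℂ)/2) by ring,
        Complex.exp_add]
      field_simp
    rw [hcongr, integral_const_mul, integral_cexp_Ioi _ (by simp)]
    have h2 : (Complex.I*(t₀:ℂ) - 1/2) ≠ 0 := by
      intro h
      have := congrArg Complex.re h
      simp at this
    have h3 : (-1 + Complex.I*(t₀:ℂ)*2 : ℂ) ≠ 0 := by
      intro h; have := congrArg Complex.re h; simp at this
    have h4 : (1 - Complex.I*(t₀:ℂ)*2 : ℂ) ≠ 0 := by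
      intro h; have := congrArg Complex.re h; simp at this
    have h4 := ne_z t₀
    field_simp
    have h6 : (Complex.I*(t₀:ℂ)*2 - 1 : ℂ) ≠ 0 := fun h => h3 (by linear_combination h)
    rw [← neg_div, div_eq_iff h6]
    ring
  rw [← hval]
  exact key.2

lemma frullani (t : ℝ) :
    (∫ x in Ioi (0:ℝ),
        (Complex.exp (Complex.I*t*x) - 1) * Complex.ofReal (Real.exp (-x/2) / x))
      = - Complex.log (1 - 2*Complex.I*t) := by
  set G : ℝ → ℂ := fun t => ∫ x in Ioi (0:ℝ),
    (Complex.exp (Complex.I*t*x) - 1) * Complex.ofReal (Real.exp (-x/2) / x) with hG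
  set H : ℝ → ℂ := fun t => G t + Complex.log (1 - 2*Complex.I*t) with hH
  have hL : ∀ s : ℝ, HasDerivAt (fun t : ℝ => Complex.log (1 - 2*Complex.I*t))
      ((1 - 2*Complex.I*s)⁻¹ * (-(2*Complex.I))) s := by
    intro s
    have hu : HasDerivAt (fun z : ℂ => 1 - 2*Complex.I*z) (-(2*Complex.I)) (s:ℂ) := by
      simpa using ((hasDerivAt_id (s:ℂ)).const_mul (2*Complex.I)).const_sub 1
    have hmem : (1 - 2*Complex.I*(s:ℂ)) ∈ Complex.slitPlane := by
      rw [Complex.mem_slitPlane_iff]; left; simp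
    exact ((Complex.hasDerivAt_log hmem).comp (s:ℂ) hu).comp_ofReal
  have hHderiv : ∀ s : ℝ, HasDerivAt H 0 s := by
    intro s
    have := (hasDerivG s).add (hL s)
    have hz := ne_z s
    have heq : 2*Complex.I/(1 - 2*Complex.I*s) + (1 - 2*Complex.I*s)⁻¹ * (-(2*Complex.I)) = 0 := by
      field_simp
      ring
    rw [heq] at this
    exact this
  have hconst : H t = H 0 :=
    is_const_of_deriv_eq_zero (fun s => (hHderiv s).differentiableAt)
      (fun s => (hHderiv s).deriv) t 0
  have hG0 : G 0 = 0 := by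
    rw [hG]
    simp
  have hH0 : H 0 = 0 := by
    rw [hH]; simp only [hG0]
    norm_num
  have : G t + Complex.log (1 - 2*Complex.I*t) = 0 := by
    rw [← hH0]; exact hconst
  linear_combination this

/-- The Lévy–Khintchine representation of the chi-square characteristic function:
for `k > 0` and real `t`,
`(1−2it)^{−k/2} = exp(∫₀^∞ (e^{itx}−1)·(k/2)e^{−x/2}/x dx)` (principal complex power). -/
theorem stmt9 (k : ℝ) (hk : 0 < k) (t : ℝ) :
    (1 - 2 * Complex.I * t) ^ (-(k : ℂ) / 2)
      = Complex.exp (∫ x in Set.Ioi (0 : ℝ),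
          (Complex.exp (Complex.I * t * x) - 1) *
            Complex.ofReal ((k / 2) * Real.exp (-x / 2) / x)) := by
  have hint : (∫ x in Set.Ioi (0 : ℝ),
      (Complex.exp (Complex.I * t * x) - 1) * Complex.ofReal ((k / 2) * Real.exp (-x / 2) / x))
      = ((k:ℂ)/2) * ∫ x in Ioi (0:ℝ),
          (Complex.exp (Complex.I*t*x) - 1) * Complex.ofReal (Real.exp (-x/2) / x) := by
    rw [← integral_const_mul]
    refine integral_congr_ae (Eventually.of_forall fun x => ?_)
    push_cast
    ring
  rw [hint, frullani, Complex.cpow_def_of_ne_zero (ne_z t)]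
  congr 1
  ring
end

section
/- Fix real m₁ > 0 and m₂ > 0. For every real t, ∫_{−∞}^∞ e^{itx} · f_{z(m₁,m₂)}(x) dx = (m₂/m₁)^{it/2} · Γ((m₁+it)/2) Γ((m₂−it)/2) / (Γ(m₁/2) Γ(m₂/2)), where f_{z(m₁,m₂)}(x) = (2 m₁^{m₁/2} m₂^{m₂/2} Γ((m₁+m₂)/2)/(Γ(m₁/2)Γ(m₂/2))) · e^{m₁ x}/(m₂ + m₁ e^{2x})^{(m₁+m₂)/2}, Γ is the complex gamma function, and (m₂/m₁)^{it/2} = exp((it/2)·log(m₂/m₁)). -/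
open MeasureTheory Real

noncomputable def fzF (m₁ m₂ x : ℝ) : ℝ := m₁ * Real.exp (2*x) / (m₂ + m₁ * Real.exp (2*x))
noncomputable def fzF' (m₁ m₂ x : ℝ) : ℝ :=
  2*m₁*m₂*Real.exp (2*x) / (m₂ + m₁ * Real.exp (2*x))^2

lemma fzD_pos {m₁ m₂ : ℝ} (h1 : 0 < m₁) (h2 : 0 < m₂) (x : ℝ) :
    0 < m₂ + m₁ * Real.exp (2*x) := by positivity

lemma fzF_hasDeriv {m₁ m₂ : ℝ} (h1 : 0 < m₁) (h2 : 0 < m₂) (x : ℝ) :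
    HasDerivAt (fzF m₁ m₂) (fzF' m₁ m₂ x) x := by
  have he : HasDerivAt (fun x : ℝ => Real.exp (2*x)) (2 * Real.exp (2*x)) x := by
    have h := ((hasDerivAt_id x).const_mul (2:ℝ)).exp
    simp only [id_eq] at h
    convert h using 1; ring
  have hn : HasDerivAt (fun x : ℝ => m₁ * Real.exp (2*x)) (m₁ * (2*Real.exp (2*x))) x :=
    he.const_mul m₁
  have hd : HasDerivAt (fun x : ℝ => m₂ + m₁ * Real.exp (2*x)) (m₁ * (2*Real.exp (2*x))) x :=
    hn.const_add m₂
  have := hn.div hd (fzD_pos h1 h2 x).ne'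
  refine this.congr_deriv ?_
  rw [fzF']
  field_simp
  ring

lemma fzF_inj {m₁ m₂ : ℝ} (h1 : 0 < m₁) (h2 : 0 < m₂) :
    Set.InjOn (fzF m₁ m₂) Set.univ := by
  intro a _ b _ hab
  rw [fzF, fzF, div_eq_div_iff (fzD_pos h1 h2 a).ne' (fzD_pos h1 h2 b).ne'] at hab
  have h3 : m₁ * m₂ * Real.exp (2*a) = m₁ * m₂ * Real.exp (2*b) := by linear_combination hab
  have h4 : Real.exp (2*a) = Real.exp (2*b) :=
    mul_left_cancel₀ (by positivity) h3
  have := Real.exp_injective h4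
  linarith

lemma fzF_image {m₁ m₂ : ℝ} (h1 : 0 < m₁) (h2 : 0 < m₂) :
    fzF m₁ m₂ '' Set.univ = Set.Ioo 0 1 := by
  ext v
  simp only [Set.image_univ, Set.mem_range, Set.mem_Ioo]
  constructor
  · rintro ⟨x, rfl⟩
    have hD := fzD_pos h1 h2 x
    constructor
    · rw [fzF]; positivity
    · rw [fzF, div_lt_one hD]; nlinarith [Real.exp_pos (2*x)]
  · rintro ⟨hv0, hv1⟩
    have h1v : 0 < 1 - v := by linarith
    have hr : 0 < m₂ * v / (m₁ * (1 - v)) := by positivity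
    refine ⟨Real.log (m₂ * v / (m₁ * (1 - v))) / 2, ?_⟩
    rw [fzF, show 2 * (Real.log (m₂ * v / (m₁ * (1 - v))) / 2)
        = Real.log (m₂ * v / (m₁ * (1 - v))) by ring, Real.exp_log hr]
    field_simp
    ring

lemma cpow_eq_exp {r : ℝ} (hr : 0 < r) (c : ℂ) :
    (r : ℂ) ^ c = Complex.exp (c * (Real.log r : ℂ)) := by
  rw [Complex.cpow_def_of_ne_zero (by exact_mod_cast hr.ne'), Complex.ofReal_log hr.le, mul_comm]


/-- The characteristic function of the Fisher z-distribution: for `m₁, m₂ > 0` and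
real `t`,
`∫ℝ e^{itx} f_{z(m₁,m₂)}(x) dx
  = (m₂/m₁)^{it/2}·Γ((m₁+it)/2)Γ((m₂−it)/2)/(Γ(m₁/2)Γ(m₂/2))`
with `f_{z(m₁,m₂)}(x) = (2 m₁^{m₁/2} m₂^{m₂/2} Γ((m₁+m₂)/2)/(Γ(m₁/2)Γ(m₂/2)))·
e^{m₁x}/(m₂+m₁e^{2x})^{(m₁+m₂)/2}` and `(m₂/m₁)^{it/2} = exp((it/2)·log(m₂/m₁))`. -/
theorem stmt13 (m₁ m₂ : ℝ) (h1 : 0 < m₁) (h2 : 0 < m₂) (t : ℝ) :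
    ∫ x : ℝ,
        Complex.exp (Complex.I * t * x) *
          Complex.ofReal
            ((2 * m₁ ^ (m₁ / 2) * m₂ ^ (m₂ / 2) * Real.Gamma ((m₁ + m₂) / 2) /
                (Real.Gamma (m₁ / 2) * Real.Gamma (m₂ / 2))) *
              Real.exp (m₁ * x) / (m₂ + m₁ * Real.exp (2 * x)) ^ ((m₁ + m₂) / 2))
      = Complex.exp (Complex.I * t / 2 * Complex.ofReal (Real.log (m₂ / m₁))) *
          Complex.Gamma ((m₁ + Complex.I * t) / 2) * Complex.Gamma ((m₂ - Complex.I * t) / 2) /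
          (Complex.Gamma ((m₁ : ℂ) / 2) * Complex.Gamma ((m₂ : ℂ) / 2)) := by
  set s : ℝ := (m₁ + m₂) / 2 with hs_def
  have hs0 : 0 < s := by positivity
  set C : ℝ := 2 * m₁ ^ (m₁ / 2) * m₂ ^ (m₂ / 2) * Real.Gamma s /
      (Real.Gamma (m₁ / 2) * Real.Gamma (m₂ / 2)) with hC_def
  set u : ℂ := ((m₁ : ℂ) + Complex.I * t) / 2 with hu_def
  set w : ℂ := ((m₂ : ℂ) - Complex.I * t) / 2 with hw_def
  have hu : 0 < u.re := by
    rw [hu_def]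
    simp [Complex.div_re, Complex.add_re, Complex.mul_re, Complex.normSq]
    positivity
  have hw : 0 < w.re := by
    rw [hw_def]
    simp [Complex.div_re, Complex.sub_re, Complex.mul_re, Complex.normSq]
    positivity
  have huw : u + w = (s : ℂ) := by
    rw [hu_def, hw_def, hs_def]; push_cast; ring
  set k : ℂ := (C : ℂ) / (2 * Complex.exp (u * (Real.log m₁ : ℂ)) *
      Complex.exp (w * (Real.log m₂ : ℂ))) with hk_def
  set g : ℝ → ℂ := fun v => (v : ℂ) ^ (u - 1) * (1 - (v : ℂ)) ^ (w - 1) with hg_def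
  clear_value s C u w k g
  -- pointwise identity
  have hpt : ∀ x : ℝ,
      Complex.exp (Complex.I * t * x) *
        Complex.ofReal (C * Real.exp (m₁ * x) / (m₂ + m₁ * Real.exp (2 * x)) ^ s)
      = k * (|fzF' m₁ m₂ x| • g (fzF m₁ m₂ x)) := by
    intro x
    have hD := fzD_pos h1 h2 x
    have hfx0 : 0 < fzF m₁ m₂ x := by rw [fzF]; positivity
    have hfx1 : fzF m₁ m₂ x < 1 := by
      rw [fzF, div_lt_one hD]; nlinarith [Real.exp_pos (2*x)]
    have h1f : 1 - fzF m₁ m₂ x = m₂ / (m₂ + m₁ * Real.exp (2*x)) := by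
      rw [fzF]; field_simp; ring
    have hlogf : Real.log (fzF m₁ m₂ x)
        = Real.log m₁ + 2*x - Real.log (m₂ + m₁ * Real.exp (2*x)) := by
      rw [fzF, Real.log_div (by positivity) hD.ne',
        Real.log_mul h1.ne' (Real.exp_pos _).ne', Real.log_exp]
    have hlog1f : Real.log (1 - fzF m₁ m₂ x)
        = Real.log m₂ - Real.log (m₂ + m₁ * Real.exp (2*x)) := by
      rw [h1f, Real.log_div h2.ne' hD.ne']
    have habs : |fzF' m₁ m₂ x| = fzF' m₁ m₂ x := abs_of_pos (by rw [fzF']; positivity)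
    have hf'exp : fzF' m₁ m₂ x = Real.exp (Real.log 2 + Real.log m₁ + Real.log m₂ + 2*x
        - 2 * Real.log (m₂ + m₁ * Real.exp (2*x))) := by
      rw [Real.exp_sub, Real.exp_add, Real.exp_add, Real.exp_add, Real.exp_log two_pos,
        Real.exp_log h1, Real.exp_log h2,
        show (2:ℝ) * Real.log (m₂ + m₁ * Real.exp (2*x))
          = Real.log ((m₂ + m₁ * Real.exp (2*x))^2) by rw [Real.log_pow]; push_cast; ring,
        Real.exp_log (by positivity), fzF']
    have hDs : (m₂ + m₁ * Real.exp (2 * x)) ^ s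
        = Real.exp (Real.log (m₂ + m₁ * Real.exp (2*x)) * s) := by
      rw [Real.rpow_def_of_pos hD]
    rw [habs, hg_def]
    simp only
    rw [show (1:ℂ) - ((fzF m₁ m₂ x : ℝ) : ℂ) = ((1 - fzF m₁ m₂ x : ℝ) : ℂ) by push_cast; ring]
    rw [cpow_eq_exp hfx0, cpow_eq_exp (by linarith : (0:ℝ) < 1 - fzF m₁ m₂ x),
      hlogf, hlog1f, hf'exp, hDs, hk_def]
    rw [Complex.real_smul]
    push_cast [Complex.ofReal_exp]
    rw [show Complex.exp (Complex.I * t * x) *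
        ((C:ℂ) * Complex.exp ((m₁:ℂ) * x) /
          Complex.exp ((Real.log (m₂ + m₁ * Real.exp (2*x)) : ℂ) * (s:ℂ)))
        = (C:ℂ) * Complex.exp (Complex.I * t * x + (m₁:ℂ) * x
            - (Real.log (m₂ + m₁ * Real.exp (2*x)) : ℂ) * (s:ℂ)) by
      rw [Complex.exp_sub, Complex.exp_add]; ring]
    rw [show (C:ℂ) / (2 * Complex.exp (u * (Real.log m₁ : ℂ)) *
          Complex.exp (w * (Real.log m₂ : ℂ))) *
        (Complex.exp ((Real.log 2 : ℂ) + (Real.log m₁:ℂ) + (Real.log m₂:ℂ) + 2*(x:ℂ)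
            - 2 * (Real.log (m₂ + m₁ * Real.exp (2*x)) : ℂ)) *
          (Complex.exp ((u - 1) * ((Real.log m₁:ℂ) + 2*(x:ℂ)
              - (Real.log (m₂ + m₁ * Real.exp (2*x)) : ℂ))) *
            Complex.exp ((w - 1) * ((Real.log m₂:ℂ)
              - (Real.log (m₂ + m₁ * Real.exp (2*x)) : ℂ)))))
        = (C:ℂ) / (2 * Complex.exp (u * (Real.log m₁ : ℂ)) *
          Complex.exp (w * (Real.log m₂ : ℂ))) *
          Complex.exp (((Real.log 2 : ℂ) + (Real.log m₁:ℂ) + (Real.log m₂:ℂ) + 2*(x:ℂ)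
            - 2 * (Real.log (m₂ + m₁ * Real.exp (2*x)) : ℂ))
            + ((u - 1) * ((Real.log m₁:ℂ) + 2*(x:ℂ)
              - (Real.log (m₂ + m₁ * Real.exp (2*x)) : ℂ)))
            + ((w - 1) * ((Real.log m₂:ℂ)
              - (Real.log (m₂ + m₁ * Real.exp (2*x)) : ℂ)))) by
      rw [Complex.exp_add, Complex.exp_add]; ring]
    have h2c : (2:ℂ) = Complex.exp ((Real.log 2 : ℂ)) := by
      rw [← Complex.ofReal_exp, Real.exp_log two_pos]
      norm_num
    have hne : (2:ℂ) * Complex.exp (u * (Real.log m₁ : ℂ)) *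
        Complex.exp (w * (Real.log m₂ : ℂ)) ≠ 0 := by
      apply mul_ne_zero (mul_ne_zero two_ne_zero (Complex.exp_ne_zero _)) (Complex.exp_ne_zero _)
    rw [div_mul_eq_mul_div, eq_comm, div_eq_iff hne]
    conv_rhs => rw [h2c]
    rw [← Complex.exp_add, ← Complex.exp_add, mul_assoc, ← Complex.exp_add]
    congr 1
    rw [hu_def, hw_def, hs_def]
    push_cast
    ring
  -- the substitution identity
  have hderiv : ∀ x ∈ (Set.univ : Set ℝ),
      HasDerivWithinAt (fzF m₁ m₂) (fzF' m₁ m₂ x) Set.univ x :=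
    fun x _ => (fzF_hasDeriv h1 h2 x).hasDerivWithinAt
  have hsub := integral_image_eq_integral_abs_deriv_smul MeasurableSet.univ hderiv
    (fzF_inj h1 h2) g
  rw [fzF_image h1 h2, setIntegral_univ] at hsub
  have hbeta : ∫ v in Set.Ioo (0:ℝ) 1, g v = Complex.betaIntegral u w := by
    rw [hg_def, Complex.betaIntegral, intervalIntegral.integral_of_le zero_le_one,
      integral_Ioc_eq_integral_Ioo]
  calc ∫ x : ℝ, Complex.exp (Complex.I * t * x) *
          Complex.ofReal (C * Real.exp (m₁ * x) / (m₂ + m₁ * Real.exp (2 * x)) ^ s)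
      = ∫ x : ℝ, k * (|fzF' m₁ m₂ x| • g (fzF m₁ m₂ x)) :=
        integral_congr_ae (Filter.Eventually.of_forall hpt)
    _ = k * ∫ x : ℝ, |fzF' m₁ m₂ x| • g (fzF m₁ m₂ x) := integral_const_mul k _
    _ = k * Complex.betaIntegral u w := by rw [← hsub, hbeta]
    _ = Complex.exp (Complex.I * t / 2 * Complex.ofReal (Real.log (m₂ / m₁))) *
          Complex.Gamma u * Complex.Gamma w /
          (Complex.Gamma ((m₁ : ℂ) / 2) * Complex.Gamma ((m₂ : ℂ) / 2)) := by
      have hbg : Complex.betaIntegral u w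
          = Complex.Gamma u * Complex.Gamma w / (Real.Gamma s : ℂ) := by
        have h := Complex.Gamma_mul_Gamma_eq_betaIntegral hu hw
        rw [huw, Complex.Gamma_ofReal] at h
        rw [eq_div_iff (by exact_mod_cast (Real.Gamma_pos_of_pos hs0).ne')]
        linear_combination -h
      rw [hbg, hk_def]
      have hg1 : Complex.Gamma ((m₁:ℂ)/2) = (Real.Gamma (m₁/2) : ℂ) := by
        rw [show ((m₁:ℂ)/2) = ((m₁/2 : ℝ) : ℂ) by push_cast; ring, Complex.Gamma_ofReal]
      have hg2 : Complex.Gamma ((m₂:ℂ)/2) = (Real.Gamma (m₂/2) : ℂ) := by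
        rw [show ((m₂:ℂ)/2) = ((m₂/2 : ℝ) : ℂ) by push_cast; ring, Complex.Gamma_ofReal]
      have hCc : (C : ℂ) = 2 * (Complex.exp (((m₁/2 : ℝ):ℂ) * (Real.log m₁ : ℂ)) *
          Complex.exp (((m₂/2 : ℝ):ℂ) * (Real.log m₂ : ℂ))) * (Real.Gamma s : ℂ) /
          ((Real.Gamma (m₁/2) : ℂ) * (Real.Gamma (m₂/2) : ℂ)) := by
        rw [hC_def, Real.rpow_def_of_pos h1, Real.rpow_def_of_pos h2]
        push_cast [Complex.ofReal_exp]
        ring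
      have hE : Complex.exp (((m₁/2 : ℝ):ℂ) * (Real.log m₁ : ℂ)) *
          Complex.exp (((m₂/2 : ℝ):ℂ) * (Real.log m₂ : ℂ))
          = Complex.exp (Complex.I * t / 2 * ((Real.log m₂ - Real.log m₁ : ℝ) : ℂ)) *
            Complex.exp (u * (Real.log m₁ : ℂ)) * Complex.exp (w * (Real.log m₂ : ℂ)) := by
        rw [← Complex.exp_add, ← Complex.exp_add, ← Complex.exp_add]
        congr 1
        rw [hu_def, hw_def]
        push_cast
        ring
      have key : ∀ Et Eu Ew Gs Gu Gw G1 G2 : ℂ, Eu ≠ 0 → Ew ≠ 0 → Gs ≠ 0 → G1 ≠ 0 → G2 ≠ 0 →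
          2 * (Et * Eu * Ew) * Gs / (G1 * G2) / (2 * Eu * Ew) * (Gu * Gw / Gs)
            = Et * Gu * Gw / (G1 * G2) := by
        intros Et Eu Ew Gs Gu Gw G1 G2 hEu hEw hGs hG1 hG2
        field_simp
      rw [hCc, hE, Real.log_div h2.ne' h1.ne', hg1, hg2]
      have e1 := Complex.exp_ne_zero (u * (Real.log m₁ : ℂ))
      have e2 := Complex.exp_ne_zero (w * (Real.log m₂ : ℂ))
      have e3 : ((Real.Gamma s : ℂ)) ≠ 0 := by
        exact_mod_cast (Real.Gamma_pos_of_pos hs0).ne'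
      have e4 : ((Real.Gamma (m₁/2) : ℂ)) ≠ 0 := by
        exact_mod_cast (Real.Gamma_pos_of_pos (by positivity)).ne'
      have e5 : ((Real.Gamma (m₂/2) : ℂ)) ≠ 0 := by
        exact_mod_cast (Real.Gamma_pos_of_pos (by positivity)).ne'
      exact key _ _ _ _ _ _ _ _ e1 e2 e3 e4 e5
end

section
/- For every a ∈ ℝ, b > 0 and every real t ≠ 0, ∫_{−∞}^∞ e^{itx} p(x;a,b) dx = e^{ita} · π c t / sinh(π c t), where c = b√3/π and p(x;a,b) = (π/(b√3)) · exp(−(π/√3)(x−a)/b) / (1 + exp(−(π/√3)(x−a)/b))² is the logistic density. In particular p(·;a,b) integrates to 1. -/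
open MeasureTheory Real Set


lemma logistic_cf_std (s : ℝ) (hs : s ≠ 0) :
    ∫ y : ℝ, Complex.exp (Complex.I * s * y) *
        ((Real.exp (-y) / (1 + Real.exp (-y)) ^ 2 : ℝ) : ℂ)
      = (π * s : ℂ) / Complex.sinh (π * s) := by
  set G : ℝ → ℂ := fun y => Complex.exp (Complex.I * s * y) *
      ((Real.exp (-y) / (1 + Real.exp (-y)) ^ 2 : ℝ) : ℂ) with hG
  set f : ℝ → ℝ := fun u => Real.log u - Real.log (1 - u) with hf
  set f' : ℝ → ℝ := fun u => u⁻¹ + (1 - u)⁻¹ with hf'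
  have hginv : ∀ y : ℝ, f ((1 + Real.exp (-y))⁻¹) = y := by
    intro y
    have he : 0 < Real.exp (-y) := Real.exp_pos _
    have h1 : 0 < 1 + Real.exp (-y) := by linarith
    have h2 : (1 : ℝ) - (1 + Real.exp (-y))⁻¹ = Real.exp (-y) / (1 + Real.exp (-y)) := by
      field_simp
      ring
    simp only [hf, h2, Real.log_inv, Real.log_div he.ne' h1.ne', Real.log_exp]
    ring
  have himg : f '' Ioo 0 1 = univ := by
    apply eq_univ_of_forall
    intro y
    refine ⟨(1 + Real.exp (-y))⁻¹, ⟨?_, ?_⟩, hginv y⟩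
    · positivity
    · rw [inv_lt_one_iff₀]
      right; nlinarith [Real.exp_pos (-y)]
  have hinj : InjOn f (Ioo 0 1) := by
    intro u hu v hv h
    have hu2 : (1 + Real.exp (-(f u)))⁻¹ = u := by
      have hu0 : 0 < u := hu.1
      have h1u : 0 < 1 - u := by linarith [hu.2]
      have : Real.exp (-(f u)) = (1 - u) / u := by
        simp only [hf, neg_sub, Real.exp_sub, Real.exp_log hu.1, Real.exp_log h1u]
      rw [this, show (1:ℝ) + (1-u)/u = 1/u by field_simp; ring, one_div, inv_inv]
    have hv2 : (1 + Real.exp (-(f v)))⁻¹ = v := by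
      have hv0 : 0 < v := hv.1
      have h1v : 0 < 1 - v := by linarith [hv.2]
      have : Real.exp (-(f v)) = (1 - v) / v := by
        simp only [hf, neg_sub, Real.exp_sub, Real.exp_log hv.1, Real.exp_log h1v]
      rw [this, show (1:ℝ) + (1-v)/v = 1/v by field_simp; ring, one_div, inv_inv]
    rw [← hu2, ← hv2, h]
  have hderiv : ∀ u ∈ Ioo 0 1, HasDerivWithinAt f (f' u) (Ioo 0 1) u := by
    intro u hu
    have h1u : (1 : ℝ) - u ≠ 0 := (by linarith [hu.2] : (0:ℝ) < 1 - u).ne'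
    have d1 : HasDerivAt (fun u : ℝ => Real.log u) u⁻¹ u := Real.hasDerivAt_log hu.1.ne'
    have d2 : HasDerivAt (fun u : ℝ => Real.log (1 - u)) (-1 / (1 - u)) u := by
      have : HasDerivAt (fun u : ℝ => 1 - u) (-1) u := by
        simpa using (hasDerivAt_id u).const_sub 1
      exact this.log h1u
    have := (d1.sub d2).hasDerivWithinAt (s := Ioo 0 1)
    convert this using 1
    show u⁻¹ + (1 - u)⁻¹ = _
    simp only [neg_div, sub_neg_eq_add, one_div]
    all_goals rfl
  have key : ∫ y : ℝ, G y = ∫ u in Ioo (0:ℝ) 1, |f' u| • G (f u) := by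
    rw [← MeasureTheory.setIntegral_univ, ← himg]
    exact integral_image_eq_integral_abs_deriv_smul measurableSet_Ioo hderiv hinj G
  have step2 : ∫ u in Ioo (0:ℝ) 1, |f' u| • G (f u)
      = ∫ u in Ioo (0:ℝ) 1, (u : ℂ) ^ (Complex.I * s) * ((1 - u : ℝ) : ℂ) ^ (-(Complex.I * s)) := by
    apply MeasureTheory.setIntegral_congr_fun measurableSet_Ioo
    intro u hu
    have hu0 : 0 < u := hu.1
    have h1u : 0 < 1 - u := by linarith [hu.2]
    have hexp : Real.exp (-(f u)) = (1 - u) / u := by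
      simp only [hf, neg_sub, Real.exp_sub, Real.exp_log hu0, Real.exp_log h1u]
    have e1 : (↑u : ℂ) ^ (Complex.I * s) = Complex.exp (Complex.I * s * Real.log u) := by
      rw [Complex.cpow_def_of_ne_zero (by exact_mod_cast hu0.ne'),
        ← Complex.ofReal_log hu0.le]
      exact congrArg Complex.exp (mul_comm _ _)
    have e2 : ((1 - u : ℝ) : ℂ) ^ (-(Complex.I * s))
        = Complex.exp (-(Complex.I * s) * Real.log (1 - u)) := by
      rw [Complex.cpow_def_of_ne_zero (by exact_mod_cast h1u.ne'),
        ← Complex.ofReal_log h1u.le]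
      exact congrArg Complex.exp (mul_comm _ _)
    have hfp : f' u = (u * (1 - u))⁻¹ := by
      simp only [hf']; field_simp; ring
    have habs : |f' u| = (u * (1 - u))⁻¹ := by
      rw [hfp, abs_of_pos]; positivity
    have hcoef : (1 : ℝ) + (1 - u) / u = u⁻¹ := by field_simp; ring
    have hrho : Real.exp (-(f u)) / (1 + Real.exp (-(f u))) ^ 2 = u * (1 - u) := by
      rw [hexp, hcoef]; field_simp
    show |f' u| • G (f u) = _
    rw [hG]
    simp only [habs, hrho]
    rw [e1, e2, Complex.real_smul, ← Complex.exp_add]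
    have hargs : Complex.I * s * (f u : ℝ)
        = Complex.I * ↑s * ↑(Real.log u) + -(Complex.I * ↑s) * ↑(Real.log (1 - u)) := by
      simp only [hf]; push_cast; ring
    rw [hargs]
    have h1 : (u * (1 - u)) * (u * (1 - u))⁻¹ = 1 := mul_inv_cancel₀ (by positivity)
    push_cast
    rw [mul_comm]
    rw [mul_assoc]
    norm_cast
    rw [h1]
    simp
  have step3 : ∫ u in Ioo (0:ℝ) 1, (u : ℂ) ^ (Complex.I * s) * ((1 - u : ℝ) : ℂ) ^ (-(Complex.I * s))
      = Complex.betaIntegral (1 + Complex.I * s) (1 - Complex.I * s) := by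
    rw [Complex.betaIntegral, intervalIntegral.integral_of_le zero_le_one,
      MeasureTheory.integral_Ioc_eq_integral_Ioo]
    apply MeasureTheory.setIntegral_congr_fun measurableSet_Ioo
    intro u hu
    push_cast
    ring_nf
  have step4 : Complex.betaIntegral (1 + Complex.I * s) (1 - Complex.I * s)
      = (π * s : ℂ) / Complex.sinh (π * s) := by
    have hre1 : 0 < (1 + Complex.I * s).re := by simp [Complex.add_re, Complex.mul_re]
    have hre2 : 0 < (1 - Complex.I * s).re := by simp [Complex.sub_re, Complex.mul_re]
    have hbeta := Complex.Gamma_mul_Gamma_eq_betaIntegral hre1 hre2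
    have hsum : (1 + Complex.I * s) + (1 - Complex.I * s) = 2 := by ring
    have hG2 : Complex.Gamma 2 = 1 := by
      have := Complex.Gamma_add_one 1 one_ne_zero
      norm_num at this
      simpa using this
    rw [hsum, hG2, one_mul] at hbeta
    rw [← hbeta]
    have hIs : Complex.I * s ≠ 0 := by
      simp [Complex.I_ne_zero, Complex.ofReal_ne_zero, hs]
    have h1 : Complex.Gamma (1 + Complex.I * s) = Complex.I * s * Complex.Gamma (Complex.I * s) := by
      rw [add_comm]; exact Complex.Gamma_add_one _ hIs
    have h2 : Complex.Gamma (Complex.I * s) * Complex.Gamma (1 - Complex.I * s)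
        = π / Complex.sin (π * (Complex.I * s)) := Complex.Gamma_mul_Gamma_one_sub _
    have hsin : Complex.sin (↑π * (Complex.I * s)) = Complex.sinh (π * s) * Complex.I := by
      rw [show (↑π * (Complex.I * ↑s) : ℂ) = (↑π * ↑s) * Complex.I by ring, Complex.sin_mul_I]
    have hsh : Complex.sinh (↑π * ↑s) ≠ 0 := by
      have : (π * s : ℝ) ≠ 0 := mul_ne_zero Real.pi_ne_zero hs
      have h0 : Real.sinh (π * s) ≠ 0 := fun h => this (Real.sinh_injective (by simpa using h))
      rw [show ((↑π * ↑s : ℂ)) = ((π * s : ℝ) : ℂ) by push_cast; ring, ← Complex.ofReal_sinh]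
      exact_mod_cast h0
    rw [h1, mul_assoc, h2, hsin]
    field_simp [Complex.I_ne_zero]
  rw [key, step2, step3, step4]

/-- The characteristic function of the logistic distribution `l(a,b)`: for `b > 0`,
`t ≠ 0` and `c = b√3/π`,
`∫ℝ e^{itx} p(x;a,b) dx = e^{ita}·πct/sinh(πct)`,
where `p(x;a,b) = (π/(b√3))·exp(−(π/√3)(x−a)/b)/(1+exp(−(π/√3)(x−a)/b))²`. -/
theorem stmt16 (a b : ℝ) (hb : 0 < b) (t : ℝ) (ht : t ≠ 0) (c : ℝ)
    (hc : c = b * Real.sqrt 3 / π) :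
    ∫ x : ℝ,
        Complex.exp (Complex.I * t * x) *
          Complex.ofReal
            (π / (b * Real.sqrt 3) * Real.exp (-(π / Real.sqrt 3) * ((x - a) / b)) /
              (1 + Real.exp (-(π / Real.sqrt 3) * ((x - a) / b))) ^ 2)
      = Complex.exp (Complex.I * t * a) *
          Complex.ofReal (π * c * t / Real.sinh (π * c * t)) := by
  have h3 : 0 < Real.sqrt 3 := Real.sqrt_pos.mpr (by norm_num)
  have hπ : 0 < π := Real.pi_pos
  have hcpos : 0 < c := by rw [hc]; positivity
  set s : ℝ := c * t with hsdef
  have hsne : s ≠ 0 := mul_ne_zero hcpos.ne' ht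
  set F : ℝ → ℂ := fun x => Complex.exp (Complex.I * t * x) *
      Complex.ofReal
        (π / (b * Real.sqrt 3) * Real.exp (-(π / Real.sqrt 3) * ((x - a) / b)) /
          (1 + Real.exp (-(π / Real.sqrt 3) * ((x - a) / b))) ^ 2) with hF
  have h1 : ∫ x : ℝ, F x = ∫ x : ℝ, F (x + a) :=
    (MeasureTheory.integral_add_right_eq_self F a).symm
  have h2 : ∫ x : ℝ, F (x + a) = |c| • ∫ y : ℝ, F (c * y + a) := by
    rw [MeasureTheory.Measure.integral_comp_mul_left (fun x => F (x + a)) c, smul_smul, abs_inv,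
      mul_inv_cancel₀ (abs_ne_zero.mpr hcpos.ne'), one_smul]
  have hpt : ∀ y : ℝ, F (c * y + a)
      = Complex.exp (Complex.I * t * a) * (((1 / c : ℝ) : ℂ) *
          (Complex.exp (Complex.I * s * y) *
            ((Real.exp (-y) / (1 + Real.exp (-y)) ^ 2 : ℝ) : ℂ))) := by
    intro y
    have harg : -(π / Real.sqrt 3) * ((c * y + a - a) / b) = -y := by
      rw [hc]; field_simp; ring
    have hcoe : π / (b * Real.sqrt 3) = 1 / c := by
      rw [hc]; field_simp
    rw [hF]
    simp only [harg, hcoe]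
    rw [show (Complex.I * t * ((c * y + a : ℝ) : ℂ))
        = Complex.I * t * a + Complex.I * s * y by rw [hsdef]; push_cast; ring,
      Complex.exp_add]
    push_cast
    ring
  rw [h1, h2]
  simp only [hpt]
  rw [MeasureTheory.integral_const_mul, MeasureTheory.integral_const_mul,
    logistic_cf_std s hsne]
  have hsinh : Complex.sinh ((π : ℂ) * (s : ℂ)) = ((Real.sinh (π * s) : ℝ) : ℂ) := by
    rw [Complex.ofReal_sinh]; push_cast; ring_nf
  rw [hsinh]
  rw [abs_of_pos hcpos]
  rw [Complex.real_smul]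
  have hcne : (c : ℂ) ≠ 0 := by exact_mod_cast hcpos.ne'
  have hS : ((Real.sinh (π * s) : ℝ) : ℂ) ≠ 0 := by
    have : (π * s : ℝ) ≠ 0 := mul_ne_zero Real.pi_ne_zero hsne
    exact_mod_cast fun h => this (Real.sinh_injective (by simpa using h))
  rw [hsdef] at hS ⊢
  push_cast at hS ⊢
  field_simp [hcne, hS]
end
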